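/- arXiv:2502.02726 — 3 statements merged into one kernel-verified Lean document; each statement's English description precedes it below -/
import Mathlib

section
/- Γ-limsup inequality via block approximation: For every π_0 ∈ Π(ν_1,…,ν_m) there exists a family (π_ε)_{ε>0} ⊆ Π(ν_1,…,ν_m) with π_ε absolutely continuous with respect to ν_1⊗⋯⊗ν_m for every ε > 0, such that π_ε converges weakly to π_0 as ε → 0⁺ and limsup_{ε→0⁺} [ ∫ c_α dπ_ε + ε · KL(π_ε ‖ ν_1⊗⋯⊗ν_m) ] ≤ ∫ c_α dπ_0. -/
/-!
Cut `ℝ^d` into dyadic cubes of side `2⁻ⁿ` and `𝒳^m` into the corresponding product cells. The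
block approximation `πₙ` gives each product cell `C` the mass `π₀ C`, spread inside `C` as the
normalized product measure `(ν₁⊗⋯⊗ν_m)[|C]`. Summing over the cells of one coordinate, the law of
total probability shows that `πₙ` keeps the marginals `ν_j`; its density with respect to
`ν₁⊗⋯⊗ν_m` takes finitely many values, so `KL(πₙ ‖ ν₁⊗⋯⊗ν_m) < ∞`; and `πₙ`, `π₀` agree on
cells whose diameter on `𝒳^m` tends to `0`, so `∫ f dπₙ → ∫ f dπ₀` for every continuous `f`
(in particular for `c_α`). Taking `π_ε = π_{n(ε)}` with `n(ε) → ∞` slowly enough that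
`ε · KL(π_{n(ε)} ‖ ν₁⊗⋯⊗ν_m) → 0` gives a limit, not just a limsup.
-/

open MeasureTheory ProbabilityTheory Filter Topology
open scoped ENNReal NNReal

noncomputable section

/-- `ℝ^d` with the Euclidean norm. -/
abbrev Euc (d : ℕ) : Type := EuclideanSpace ℝ (Fin d)

/-- The multimarginal cost `c_α(x₁,…,x_m) = ∑_{i<j} ‖α_i x_i − α_j x_j‖²`. -/
def costα {m d : ℕ} (α : Fin m → ℝ) (x : Fin m → Euc d) : ℝ :=
  ∑ i : Fin m, ∑ j : Fin m, if i < j then ‖α i • x i - α j • x j‖ ^ 2 else 0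

open scoped Classical in
/-- Kullback–Leibler divergence, valued in `ℝ≥0∞` (it is nonnegative for probability
measures): `KL(P‖Q) = ∫ log (dP/dQ) dP` when `P ≪ Q` and the integrand is integrable,
and `∞` otherwise. -/
def KLdiv {E : Type*} [MeasurableSpace E] (P Q : Measure E) : ℝ≥0∞ :=
  if P ≪ Q ∧ Integrable (fun x => Real.log ((P.rnDeriv Q x).toReal)) P
  then ENNReal.ofReal (∫ x, Real.log ((P.rnDeriv Q x).toReal) ∂P) else ⊤

/-- The entropic multimarginal transport functional
`π ↦ ∫ c_α dπ + ε KL(π ‖ ν₁⊗⋯⊗ν_m)`, valued in `ℝ≥0∞`. -/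
def entCost {m d : ℕ} (α : Fin m → ℝ) (ε : ℝ) (ν : Fin m → Measure (Euc d))
    (π : Measure (Fin m → Euc d)) : ℝ≥0∞ :=
  ∫⁻ x, ENNReal.ofReal (costα α x) ∂π + ENNReal.ofReal ε * KLdiv π (Measure.pi ν)

/-- Membership in the coupling set `Π(ν₁,…,ν_m)`: a probability measure on `𝒳^m`
whose `j`-th marginal is `ν j` for every `j`. -/
def IsCoupling {m d : ℕ} (ν : Fin m → Measure (Euc d))
    (π : Measure (Fin m → Euc d)) : Prop :=
  IsProbabilityMeasure π ∧ ∀ j, π.map (fun x => x j) = ν j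

end

theorem lintegral_comp_eq_sum {X ι : Type*} [MeasurableSpace X] [MeasurableSpace ι] [Fintype ι]
    [DiscreteMeasurableSpace ι] {μ : Measure X} {Q : X → ι} (hQ : Measurable Q) (g : ι → ℝ≥0∞) :
    ∫⁻ x, g (Q x) ∂μ = ∑ k, μ (Q ⁻¹' {k}) * g k := by
  rw [← lintegral_map (measurable_of_finite g) hQ, lintegral_fintype]
  simp only [Measure.map_apply hQ (measurableSet_singleton _), mul_comm]

theorem cond_pi_univ_pi {κ : Type*} [Fintype κ] {Y : κ → Type*} [∀ i, MeasurableSpace (Y i)]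
    (μ : ∀ i, Measure (Y i)) [∀ i, IsFiniteMeasure (μ i)] {s : ∀ i, Set (Y i)}
    (hs : ∀ i, MeasurableSet (s i)) :
    (Measure.pi μ)[|Set.univ.pi s] = Measure.pi fun i => (μ i)[|s i] := by
  refine (Measure.pi_eq fun t ht => ?_).symm
  rw [cond_apply (MeasurableSet.univ_pi hs), ← Set.pi_inter_distrib, Measure.pi_pi, Measure.pi_pi]
  simp only [cond_apply (hs _)]
  by_cases h0 : ∃ i, μ i (s i) = 0
  · obtain ⟨i, hi⟩ := h0
    have hsi : μ i (s i ∩ t i) = 0 := measure_mono_null Set.inter_subset_left hi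
    rw [Finset.prod_eq_zero (f := fun i => μ i (s i ∩ t i)) (Finset.mem_univ i) hsi, mul_zero,
      Finset.prod_eq_zero (Finset.mem_univ i) (by rw [hsi, mul_zero])]
  · push Not at h0
    rw [ENNReal.prod_inv_distrib fun i _ j _ _ => Or.inl (h0 i), Finset.prod_mul_distrib]

theorem KLdiv_withDensity_ne_top {X : Type*} [MeasurableSpace X] {μ : Measure X} [SigmaFinite μ]
    {f : X → ℝ≥0∞} [IsFiniteMeasure (μ.withDensity f)] (hf : Measurable f)
    (hfin : (Set.range f).Finite) : KLdiv (μ.withDensity f) μ ≠ ⊤ := by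
  have hac := withDensity_absolutelyContinuous μ f
  have hrn : ∀ᵐ x ∂μ.withDensity f, (μ.withDensity f).rnDeriv μ x = f x :=
    hac.ae_le (Measure.rnDeriv_withDensity μ hf)
  obtain ⟨C, hC⟩ := (hfin.image fun t => ‖Real.log t.toReal‖).bddAbove
  have hint : Integrable (fun x => Real.log ((μ.withDensity f).rnDeriv μ x).toReal)
      (μ.withDensity f) := by
    refine .of_bound (Real.measurable_log.comp (ENNReal.measurable_toReal.comp
      (Measure.measurable_rnDeriv _ _))).aestronglyMeasurable C ?_
    filter_upwards [hrn] with x hx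
    rw [hx]
    exact hC ⟨f x, Set.mem_range_self x, rfl⟩
  rw [KLdiv, if_pos ⟨hac, hint⟩]
  exact ENNReal.ofReal_ne_top

theorem dist_integral_le_of_map_eq {X ι : Type*} [MeasurableSpace X] [MeasurableSpace ι] [Finite ι]
    [MeasurableSingletonClass ι] {μ μ' : Measure X} [IsFiniteMeasure μ] [IsFiniteMeasure μ']
    {Q : X → ι} (hQ : Measurable Q) (hμ : μ.map Q = μ'.map Q) {f : X → ℝ}
    (hf : Integrable f μ) (hf' : Integrable f μ') {S : Set X} (hS : ∀ᵐ x ∂μ, x ∈ S)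
    (hS' : ∀ᵐ x ∂μ', x ∈ S) {η : ℝ} (hη : ∀ x ∈ S, ∀ y ∈ S, Q x = Q y → dist (f x) (f y) ≤ η) :
    dist (∫ x, f x ∂μ) (∫ x, f x ∂μ') ≤ η * (μ.real Set.univ + μ'.real Set.univ) := by
  classical
  -- compare `f` with the step function equal on each cell to a value of `f` at a point of `S`
  let g : ι → ℝ := fun i => if h : ∃ x ∈ S, Q x = i then f h.choose else 0
  have hg : ∀ x ∈ S, dist (f x) (g (Q x)) ≤ η := fun x hx => by
    have h : ∃ y ∈ S, Q y = Q x := ⟨x, hx, rfl⟩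
    simp only [g, dif_pos h]
    exact hη x hx _ h.choose_spec.1 h.choose_spec.2.symm
  have hstep : ∀ ρ : Measure X, ∀ [IsFiniteMeasure ρ], Integrable f ρ → (∀ᵐ x ∂ρ, x ∈ S) →
      dist (∫ x, f x ∂ρ) (∫ x, g (Q x) ∂ρ) ≤ η * ρ.real Set.univ := fun ρ _ hfρ hSρ => by
    have hgρ : Integrable (fun x => g (Q x)) ρ :=
      (integrable_map_measure (measurable_of_finite g).aestronglyMeasurable
        hQ.aemeasurable).1 Integrable.of_finite
    rw [dist_eq_norm, ← integral_sub hfρ hgρ]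
    refine norm_integral_le_of_norm_le_const ?_
    filter_upwards [hSρ] with x hx
    exact hg x hx
  have hsame : ∫ x, g (Q x) ∂μ = ∫ x, g (Q x) ∂μ' := by
    rw [← integral_map hQ.aemeasurable (measurable_of_finite g).aestronglyMeasurable, hμ,
      integral_map hQ.aemeasurable (measurable_of_finite g).aestronglyMeasurable]
  calc dist (∫ x, f x ∂μ) (∫ x, f x ∂μ')
      ≤ dist (∫ x, f x ∂μ) (∫ x, g (Q x) ∂μ) + dist (∫ x, f x ∂μ') (∫ x, g (Q x) ∂μ') := by
        rw [hsame, dist_comm (∫ x, f x ∂μ')]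
        exact dist_triangle _ _ _
    _ ≤ η * (μ.real Set.univ + μ'.real Set.univ) := by
        rw [mul_add]
        exact add_le_add (hstep μ hf hS) (hstep μ' hf' hS')

theorem integrable_of_ae_mem_compact {X : Type*} [MeasurableSpace X] [TopologicalSpace X]
    [T2Space X] [OpensMeasurableSpace X] {μ : Measure X} [IsFiniteMeasure μ] {K : Set X}
    (hK : IsCompact K) (hμK : ∀ᵐ x ∂μ, x ∈ K) {f : X → ℝ} (hf : Continuous f) :
    Integrable f μ := by
  rw [← Measure.restrict_eq_self_of_ae_mem hμK]
  exact hf.continuousOn.integrableOn_compact hK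

theorem ae_mem_univ_pi_of_map_eval {E : Type*} [MeasurableSpace E] {m : ℕ}
    {ν : Fin m → Measure E} {π : Measure (Fin m → E)} (hπ : ∀ j, π.map (fun x => x j) = ν j)
    {𝒳 : Set E} (h𝒳 : ∀ j, ∀ᵐ y ∂ν j, y ∈ 𝒳) : ∀ᵐ x ∂π, x ∈ Set.univ.pi fun _ => 𝒳 := by
  simp only [Set.mem_univ_pi]
  exact ae_all_iff.2 fun j =>
    ae_of_ae_map (measurable_pi_apply j).aemeasurable ((hπ j).symm ▸ h𝒳 j)

section BlockApproximation

variable {E ι : Type*} {m : ℕ}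

def productCell (q : E → ι) (κ : Fin m → ι) : Set (Fin m → E) := {x | q ∘ x = κ}

theorem productCell_eq_pi (q : E → ι) (κ : Fin m → ι) :
    productCell q κ = Set.univ.pi fun j => q ⁻¹' {κ j} := by
  ext x
  simp [productCell, funext_iff]

variable [MeasurableSpace E] {q : E → ι} {ν : Fin m → Measure E} {π₀ : Measure (Fin m → E)}

noncomputable def blockApprox (q : E → ι) (ν : Fin m → Measure E) (π₀ : Measure (Fin m → E)) :
    Measure (Fin m → E) :=
  (Measure.pi ν).withDensity fun x =>
    π₀ (productCell q (q ∘ x)) / Measure.pi ν (productCell q (q ∘ x))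

theorem blockApprox_absolutelyContinuous : blockApprox q ν π₀ ≪ Measure.pi ν :=
  withDensity_absolutelyContinuous _ _

variable [MeasurableSpace ι]

theorem Measurable.comp_left {δ : Type*} (hq : Measurable q) :
    Measurable fun x : δ → E => q ∘ x :=
  measurable_pi_lambda _ fun j => hq.comp (measurable_pi_apply j)

variable [Fintype ι] [DiscreteMeasurableSpace ι]

theorem measurableSet_productCell (hq : Measurable q) (κ : Fin m → ι) :
    MeasurableSet (productCell q κ) :=
  hq.comp_left (measurableSet_singleton κ)

theorem blockApprox_eq_sum [∀ j, SigmaFinite (ν j)] (hq : Measurable q) :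
    blockApprox q ν π₀ = ∑ κ, π₀ (productCell q κ) • (Measure.pi ν)[|productCell q κ] := by
  ext T hT
  rw [blockApprox, withDensity_apply _ hT, lintegral_comp_eq_sum hq.comp_left
    (fun κ => π₀ (productCell q κ) / Measure.pi ν (productCell q κ))]
  simp only [Measure.coe_finsetSum, Finset.sum_apply, Measure.smul_apply, smul_eq_mul]
  refine Finset.sum_congr rfl fun κ _ => ?_
  change (Measure.pi ν).restrict T (productCell q κ) * _ = _
  rw [Measure.restrict_apply (measurableSet_productCell hq κ),
    cond_apply (measurableSet_productCell hq κ),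
    ENNReal.div_eq_inv_mul, Set.inter_comm]
  ring

theorem sum_measure_productCell_mul (hq : Measurable q) (hπ₀ : ∀ j, π₀.map (fun x => x j) = ν j)
    (j : Fin m) (φ : ι → ℝ≥0∞) :
    ∑ κ, π₀ (productCell q κ) * φ (κ j) = ∑ k, ν j (q ⁻¹' {k}) * φ k :=
  calc ∑ κ, π₀ (productCell q κ) * φ (κ j) = ∫⁻ x, φ (q (x j)) ∂π₀ :=
        (lintegral_comp_eq_sum hq.comp_left fun κ => φ (κ j)).symm
    _ = ∫⁻ y, φ (q y) ∂ν j := by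
        rw [← hπ₀ j]
        exact (lintegral_map ((measurable_of_finite φ).comp hq) (measurable_pi_apply j)).symm
    _ = ∑ k, ν j (q ⁻¹' {k}) * φ k := lintegral_comp_eq_sum hq φ

variable [∀ j, IsFiniteMeasure (ν j)]

theorem measure_productCell_eq_zero (hq : Measurable q) (hπ₀ : ∀ j, π₀.map (fun x => x j) = ν j)
    {κ : Fin m → ι} (h : Measure.pi ν (productCell q κ) = 0) : π₀ (productCell q κ) = 0 := by
  rw [productCell_eq_pi, Measure.pi_pi] at h
  obtain ⟨j, -, hj⟩ := Finset.prod_eq_zero_iff.1 h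
  refine measure_mono_null (t := (fun x => x j) ⁻¹' (q ⁻¹' {κ j})) (fun x hx => congrFun hx j) ?_
  rwa [← Measure.map_apply (measurable_pi_apply j) (hq (measurableSet_singleton _)), hπ₀ j]

theorem map_blockApprox (hq : Measurable q) (hπ₀ : ∀ j, π₀.map (fun x => x j) = ν j) :
    (blockApprox q ν π₀).map (q ∘ ·) = π₀.map (q ∘ ·) := by
  refine Measure.ext_iff_singleton.2 fun κ => ?_
  rw [Measure.map_apply hq.comp_left (measurableSet_singleton κ),
    Measure.map_apply hq.comp_left (measurableSet_singleton κ)]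
  change blockApprox q ν π₀ (productCell q κ) = π₀ (productCell q κ)
  rw [blockApprox_eq_sum hq, Measure.coe_finsetSum, Finset.sum_apply,
    Finset.sum_eq_single κ (fun κ' _ hκ' => ?_) (by simp)]
  · rw [Measure.smul_apply, smul_eq_mul]
    by_cases h0 : Measure.pi ν (productCell q κ) = 0
    · rw [measure_productCell_eq_zero hq hπ₀ h0, zero_mul]
    · rw [cond_apply_self h0 (measure_ne_top _ _), mul_one]
  · have hdisj : productCell q κ' ∩ productCell q κ = ∅ := by
      ext x
      simp only [productCell, Set.mem_inter_iff, Set.mem_ofPred_eq, Set.mem_empty_iff_false,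
        iff_false]
      exact fun h => hκ' (h.1.symm.trans h.2)
    rw [Measure.smul_apply, cond_apply (measurableSet_productCell hq κ'), hdisj, measure_empty,
      mul_zero, smul_zero]

theorem blockApprox_apply_univ (hq : Measurable q) (hπ₀ : ∀ j, π₀.map (fun x => x j) = ν j) :
    blockApprox q ν π₀ Set.univ = π₀ Set.univ := by
  simpa [Measure.map_apply hq.comp_left MeasurableSet.univ] using
    congrArg (· Set.univ) (map_blockApprox hq hπ₀)

theorem isProbabilityMeasure_blockApprox [IsProbabilityMeasure π₀] (hq : Measurable q)
    (hπ₀ : ∀ j, π₀.map (fun x => x j) = ν j) : IsProbabilityMeasure (blockApprox q ν π₀) :=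
  ⟨by rw [blockApprox_apply_univ hq hπ₀, measure_univ]⟩

theorem map_eval_blockApprox (hq : Measurable q) (hπ₀ : ∀ j, π₀.map (fun x => x j) = ν j)
    (j : Fin m) : (blockApprox q ν π₀).map (fun x => x j) = ν j := by
  ext S hS
  rw [Measure.map_apply (measurable_pi_apply j) hS, blockApprox_eq_sum hq, Measure.coe_finsetSum,
    Finset.sum_apply]
  have hterm : ∀ κ,
      (π₀ (productCell q κ) • (Measure.pi ν)[|productCell q κ]) ((fun x => x j) ⁻¹' S) =
      π₀ (productCell q κ) * (ν j)[|q ⁻¹' {κ j}] S := by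
    intro κ
    rw [Measure.smul_apply, smul_eq_mul]
    by_cases h0 : π₀ (productCell q κ) = 0
    · rw [h0, zero_mul, zero_mul]
    have hpos : ∀ l, ν l (q ⁻¹' {κ l}) ≠ 0 := by
      intro l hl
      refine h0 (measure_productCell_eq_zero hq hπ₀ ?_)
      rw [productCell_eq_pi, Measure.pi_pi]
      exact Finset.prod_eq_zero (Finset.mem_univ l) hl
    have := fun l => cond_isProbabilityMeasure (hpos l)
    rw [productCell_eq_pi, cond_pi_univ_pi ν fun l => hq (measurableSet_singleton _),
      ← Measure.map_apply (measurable_pi_apply j) hS, (measurePreserving_eval _ j).map_eq]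
  simp_rw [hterm]
  rw [sum_measure_productCell_mul hq hπ₀ j fun k => (ν j)[|q ⁻¹' {k}] S]
  conv_rhs => rw [← sum_meas_smul_cond_fiber hq (ν j)]
  simp [Measure.coe_finsetSum]

theorem KLdiv_blockApprox_ne_top [IsFiniteMeasure π₀] (hq : Measurable q)
    (hπ₀ : ∀ j, π₀.map (fun x => x j) = ν j) : KLdiv (blockApprox q ν π₀) (Measure.pi ν) ≠ ⊤ := by
  have : IsFiniteMeasure (blockApprox q ν π₀) :=
    ⟨by rw [blockApprox_apply_univ hq hπ₀]; exact measure_lt_top _ _⟩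
  rw [blockApprox] at this ⊢
  exact KLdiv_withDensity_ne_top
    ((measurable_of_finite fun κ => π₀ (productCell q κ) / Measure.pi ν (productCell q κ)).comp
      hq.comp_left)
    ((Set.finite_range fun κ => π₀ (productCell q κ) / Measure.pi ν (productCell q κ)).subset
      (Set.range_subset_iff.2 fun x => ⟨q ∘ x, rfl⟩))

end BlockApproximation

section Convergence

variable {E : Type*} [MetricSpace E] [MeasurableSpace E] [BorelSpace E] [SecondCountableTopology E]
  {ι : ℕ → Type*} [∀ n, MeasurableSpace (ι n)] [∀ n, Fintype (ι n)]
  [∀ n, DiscreteMeasurableSpace (ι n)] {q : ∀ n, E → ι n} {m : ℕ} {ν : Fin m → Measure E}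
  [∀ j, IsFiniteMeasure (ν j)] {π₀ : Measure (Fin m → E)} [IsProbabilityMeasure π₀]
  {𝒳 : Set E}

theorem tendsto_integral_blockApprox (hq : ∀ n, Measurable (q n))
    (hmesh : ∀ δ > 0, ∀ᶠ n in atTop, ∀ y ∈ 𝒳, ∀ z ∈ 𝒳, q n y = q n z → dist y z < δ)
    (h𝒳 : IsCompact 𝒳) (hν𝒳 : ∀ j, ∀ᵐ y ∂ν j, y ∈ 𝒳) (hπ₀ : ∀ j, π₀.map (fun x => x j) = ν j)
    {f : (Fin m → E) → ℝ} (hf : Continuous f) :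
    Tendsto (fun n => ∫ x, f x ∂blockApprox (q n) ν π₀) atTop (𝓝 (∫ x, f x ∂π₀)) := by
  have := fun n => isProbabilityMeasure_blockApprox (ν := ν) (hq n) hπ₀
  set K : Set (Fin m → E) := Set.univ.pi fun _ => 𝒳
  have hK : IsCompact K := isCompact_univ_pi fun _ => h𝒳
  have hK₀ : ∀ᵐ x ∂π₀, x ∈ K := ae_mem_univ_pi_of_map_eval hπ₀ hν𝒳
  have hKn : ∀ n, ∀ᵐ x ∂blockApprox (q n) ν π₀, x ∈ K := fun n =>
    ae_mem_univ_pi_of_map_eval (map_eval_blockApprox (hq n) hπ₀) hν𝒳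
  refine Metric.tendsto_nhds.2 fun η hη => ?_
  obtain ⟨δ, hδ, hfδ⟩ := Metric.uniformContinuousOn_iff.1
    (hK.uniformContinuousOn_of_continuous hf.continuousOn) (η / 4) (by positivity)
  filter_upwards [hmesh δ hδ] with n hn
  calc dist (∫ x, f x ∂blockApprox (q n) ν π₀) (∫ x, f x ∂π₀)
      ≤ η / 4 * (1 + 1) := by
        simpa using dist_integral_le_of_map_eq (hq n).comp_left
          (map_blockApprox (hq n) hπ₀) (integrable_of_ae_mem_compact hK (hKn n) hf)
          (integrable_of_ae_mem_compact hK hK₀ hf) (hKn n) hK₀ fun x hx y hy hxy =>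
          (hfδ x hx y hy ((dist_pi_lt_iff hδ).2 fun j =>
            hn _ (hx j trivial) _ (hy j trivial) (congrFun hxy j))).le
    _ < η := by linarith

theorem tendsto_lintegral_blockApprox (hq : ∀ n, Measurable (q n))
    (hmesh : ∀ δ > 0, ∀ᶠ n in atTop, ∀ y ∈ 𝒳, ∀ z ∈ 𝒳, q n y = q n z → dist y z < δ)
    (h𝒳 : IsCompact 𝒳) (hν𝒳 : ∀ j, ∀ᵐ y ∂ν j, y ∈ 𝒳) (hπ₀ : ∀ j, π₀.map (fun x => x j) = ν j)
    {f : (Fin m → E) → ℝ} (hf : Continuous f) (hf0 : 0 ≤ f) :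
    Tendsto (fun n => ∫⁻ x, ENNReal.ofReal (f x) ∂blockApprox (q n) ν π₀) atTop
      (𝓝 (∫⁻ x, ENNReal.ofReal (f x) ∂π₀)) := by
  have hK : IsCompact (Set.univ.pi fun _ : Fin m => 𝒳) := isCompact_univ_pi fun _ => h𝒳
  have hint : ∀ π : Measure (Fin m → E), IsProbabilityMeasure π →
      (∀ j, π.map (fun x => x j) = ν j) →
      ∫⁻ x, ENNReal.ofReal (f x) ∂π = ENNReal.ofReal (∫ x, f x ∂π) := fun π _ hπ =>
    (ofReal_integral_eq_lintegral_ofReal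
      (integrable_of_ae_mem_compact hK (ae_mem_univ_pi_of_map_eval hπ hν𝒳) hf)
      (.of_forall hf0)).symm
  simp only [hint _ (isProbabilityMeasure_blockApprox (hq _) hπ₀)
    (map_eval_blockApprox (hq _) hπ₀), hint π₀ inferInstance hπ₀]
  exact ENNReal.tendsto_ofReal (tendsto_integral_blockApprox hq hmesh h𝒳 hν𝒳 hπ₀ hf)

end Convergence

section Dyadic

variable {d : ℕ}

noncomputable def dyadicCell (n : ℕ) (y : Euc d) : Fin d → Set.Icc (-2 ^ n : ℤ) (2 ^ n) :=
  fun i => Set.projIcc _ _ (neg_le_self (by positivity)) ⌊(2 : ℝ) ^ n * y i⌋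

theorem measurable_dyadicCell (n : ℕ) : Measurable (dyadicCell (d := d) n) :=
  measurable_pi_lambda _ fun i => Measurable.of_discrete.comp <| Int.measurable_floor.comp <|
    measurable_const.mul <| (measurable_pi_apply i).comp (WithLp.measurable_ofLp 2 _)

theorem floor_mem_Icc_of_abs_le_one {n : ℕ} {t : ℝ} (ht : |t| ≤ 1) :
    ⌊(2 : ℝ) ^ n * t⌋ ∈ Set.Icc (-2 ^ n : ℤ) (2 ^ n) := by
  obtain ⟨h₁, h₂⟩ := abs_le.1 ht
  have h2n : (0 : ℝ) < 2 ^ n := by positivity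
  constructor
  · exact Int.le_floor.2 (by push_cast; nlinarith)
  · exact Int.floor_le_iff.2 (by push_cast; nlinarith)

theorem dist_coord_le_of_dyadicCell_eq {n : ℕ} {y z : Euc d} (hy : ∀ i, |y i| ≤ 1)
    (hz : ∀ i, |z i| ≤ 1) (h : dyadicCell n y = dyadicCell n z) (i : Fin d) :
    dist (y i) (z i) ≤ (2 ^ n)⁻¹ := by
  have hfloor : ⌊(2 : ℝ) ^ n * y i⌋ = ⌊(2 : ℝ) ^ n * z i⌋ := by
    have := congrFun h i
    simp only [dyadicCell, Set.projIcc_of_mem _ (floor_mem_Icc_of_abs_le_one (hy i)),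
      Set.projIcc_of_mem _ (floor_mem_Icc_of_abs_le_one (hz i)), Subtype.mk.injEq] at this
    exact this
  have := Int.abs_sub_lt_one_of_floor_eq_floor hfloor
  rw [← mul_sub, abs_mul, abs_of_pos (by positivity)] at this
  rw [Real.dist_eq, inv_eq_one_div, le_div_iff₀ (by positivity), mul_comm]
  exact this.le

theorem dyadicCell_mesh (δ : ℝ) (hδ : 0 < δ) : ∀ᶠ n in atTop, ∀ y z : Euc d,
    (∀ i, |y i| ≤ 1) → (∀ i, |z i| ≤ 1) → dyadicCell n y = dyadicCell n z → dist y z < δ := by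
  obtain ⟨C, hC⟩ : ∃ C : ℝ≥0, AntilipschitzWith C (WithLp.ofLp : Euc d → Fin d → ℝ) :=
    ⟨_, PiLp.antilipschitzWith_ofLp 2 _⟩
  have hlim : Tendsto (fun n : ℕ => (C : ℝ) * (2 ^ n)⁻¹) atTop (𝓝 0) := by
    simpa using (tendsto_inv_atTop_zero.comp
      (tendsto_pow_atTop_atTop_of_one_lt one_lt_two)).const_mul (C : ℝ)
  filter_upwards [hlim.eventually_lt_const hδ] with n hn y z hy hz h
  calc dist y z ≤ C * dist (WithLp.ofLp y) (WithLp.ofLp z) := hC.le_mul_dist y z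
    _ ≤ C * (2 ^ n)⁻¹ := by
        gcongr
        exact (dist_pi_le_iff (by positivity)).2 (dist_coord_le_of_dyadicCell_eq hy hz h)
    _ < δ := hn

end Dyadic

theorem exists_tendsto_atTop_mul_tendsto_zero (K : ℕ → ℝ) :
    ∃ N : ℝ → ℕ, Tendsto N (𝓝[>] 0) atTop ∧ Tendsto (fun ε => ε * K (N ε)) (𝓝[>] 0) (𝓝 0) := by
  classical
  -- `N ε` is the largest `n` with `G n ≤ ε^(-1/2)`, where `G` is an increasing majorant of `|K|`
  set G : ℕ → ℝ := fun n => n + ∑ k ∈ Finset.range (n + 1), |K k|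
  have hGn : ∀ n : ℕ, (n : ℝ) ≤ G n := fun n =>
    le_add_of_nonneg_right (Finset.sum_nonneg fun _ _ => abs_nonneg _)
  have hGK : ∀ n, |K n| ≤ G n := fun n =>
    (Finset.single_le_sum (f := fun k => |K k|) (fun _ _ => abs_nonneg _)
      (Finset.self_mem_range_succ n)).trans (le_add_of_nonneg_left n.cast_nonneg)
  have hsqrt : Tendsto (fun ε : ℝ => √ε) (𝓝[>] 0) (𝓝 0) :=
    (Real.continuous_sqrt.tendsto' 0 0 Real.sqrt_zero).mono_left nhdsWithin_le_nhds
  set T : ℝ → ℝ := fun ε => (√ε)⁻¹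
  have hT : Tendsto T (𝓝[>] 0) atTop := tendsto_inv_nhdsGT_zero.comp
    (tendsto_nhdsWithin_of_tendsto_nhds_of_eventually_within _ hsqrt
      (eventually_nhdsWithin_of_forall fun _ hε => Real.sqrt_pos.2 hε))
  set N : ℝ → ℕ := fun ε => Nat.findGreatest (fun n => G n ≤ T ε) ⌊T ε⌋₊
  refine ⟨N, tendsto_atTop.2 fun A => ?_, ?_⟩
  · filter_upwards [hT.eventually_ge_atTop (G A)] with ε hε
    exact Nat.le_findGreatest (Nat.le_floor ((hGn A).trans hε)) hε
  · refine squeeze_zero_norm' ?_ hsqrt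
    filter_upwards [hT.eventually_ge_atTop (G 0), self_mem_nhdsWithin] with ε hε (hε0 : 0 < ε)
    have hGN : G (N ε) ≤ T ε :=
      Nat.findGreatest_spec (P := fun n => G n ≤ T ε) (Nat.zero_le _) hε
    calc ‖ε * K (N ε)‖ = ε * |K (N ε)| := by rw [norm_mul, Real.norm_of_nonneg hε0.le]; rfl
      _ ≤ ε * T ε := by gcongr; exact (hGK _).trans hGN
      _ = √ε := by simp only [T, ← div_eq_mul_inv, Real.div_sqrt]

theorem continuous_costα {m d : ℕ} (α : Fin m → ℝ) : Continuous (costα (d := d) α) :=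
  continuous_finsetSum _ fun i _ => continuous_finsetSum _ fun j _ => by
    split_ifs <;> fun_prop

theorem costα_nonneg {m d : ℕ} (α : Fin m → ℝ) : 0 ≤ costα (d := d) α := fun _ =>
  Finset.sum_nonneg fun i _ => Finset.sum_nonneg fun j _ => by split_ifs <;> positivity

theorem gamma_limsup_general {d m : ℕ}
    (𝒳 : Set (Euc d)) (h𝒳c : IsCompact 𝒳) (h𝒳b : ∀ x ∈ 𝒳, ∀ i, |x i| ≤ 1)
    (ν : Fin m → Measure (Euc d)) (hν : ∀ j, IsProbabilityMeasure (ν j))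
    (hνsupp : ∀ j, ν j 𝒳 = 1)
    (α : Fin m → ℝ)
    (π₀ : Measure (Fin m → Euc d)) (hπ₀ : IsCoupling ν π₀) :
    ∃ π : ℝ → Measure (Fin m → Euc d),
      (∀ ε : ℝ, 0 < ε → IsCoupling ν (π ε) ∧ (π ε) ≪ Measure.pi ν) ∧
      (∀ f : BoundedContinuousFunction (Fin m → Euc d) ℝ,
        Tendsto (fun ε => ∫ x, f x ∂(π ε)) (𝓝[>] (0 : ℝ)) (𝓝 (∫ x, f x ∂π₀))) ∧
      limsup (fun ε => entCost α ε ν (π ε)) (𝓝[>] (0 : ℝ)) ≤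
        ∫⁻ x, ENNReal.ofReal (costα α x) ∂π₀ := by
  obtain ⟨hπ₀p, hπ₀m⟩ := hπ₀
  have := hν
  have hν𝒳 : ∀ j, ∀ᵐ y ∂ν j, y ∈ 𝒳 := fun j =>
    ae_iff.2 ((prob_compl_eq_zero_iff h𝒳c.isClosed.measurableSet).2 (hνsupp j))
  have hmesh : ∀ δ > 0, ∀ᶠ n in atTop, ∀ y ∈ 𝒳, ∀ z ∈ 𝒳,
      dyadicCell n y = dyadicCell n z → dist y z < δ := fun δ hδ =>
    (dyadicCell_mesh δ hδ).mono fun n hn y hy z hz => hn y z (h𝒳b y hy) (h𝒳b z hz)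
  set π : ℕ → Measure (Fin m → Euc d) := fun n => blockApprox (dyadicCell n) ν π₀
  obtain ⟨N, hN, hεKL⟩ :=
    exists_tendsto_atTop_mul_tendsto_zero fun n => (KLdiv (π n) (Measure.pi ν)).toReal
  have hcoupling : ∀ n, IsCoupling ν (π n) := fun n =>
    ⟨isProbabilityMeasure_blockApprox (measurable_dyadicCell n) hπ₀m,
      map_eval_blockApprox (measurable_dyadicCell n) hπ₀m⟩
  refine ⟨fun ε => π (N ε), fun ε _ => ⟨hcoupling _, blockApprox_absolutelyContinuous⟩,
    fun f => (tendsto_integral_blockApprox measurable_dyadicCell hmesh h𝒳c hν𝒳 hπ₀m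
      f.continuous).comp hN, ?_⟩
  have hcost := (tendsto_lintegral_blockApprox measurable_dyadicCell hmesh h𝒳c hν𝒳 hπ₀m
    (continuous_costα α) (costα_nonneg α)).comp hN
  have hentropy : Tendsto (fun ε => ENNReal.ofReal ε * KLdiv (π (N ε)) (Measure.pi ν))
      (𝓝[>] 0) (𝓝 0) := by
    refine (ENNReal.ofReal_zero ▸ ENNReal.tendsto_ofReal hεKL).congr' ?_
    filter_upwards [self_mem_nhdsWithin] with ε (hε : 0 < ε)
    rw [ENNReal.ofReal_mul hε.le, ENNReal.ofReal_toReal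
      (KLdiv_blockApprox_ne_top (measurable_dyadicCell _) hπ₀m)]
  have hlim : Tendsto (fun ε => entCost α ε ν (π (N ε))) (𝓝[>] 0)
      (𝓝 (∫⁻ x, ENNReal.ofReal (costα α x) ∂π₀)) := by
    rw [← add_zero (∫⁻ x, ENNReal.ofReal (costα α x) ∂π₀)]
    exact hcost.add hentropy
  exact hlim.limsup_eq.le

/-- **Γ-limsup inequality via block approximation.** For every
`π₀ ∈ Π(ν₁,…,ν_m)` there is a family `(π ε)_{ε>0} ⊆ Π(ν₁,…,ν_m)` with
`π ε ≪ ν₁⊗⋯⊗ν_m`, converging weakly to `π₀` as `ε → 0⁺`, such that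
`limsup_{ε→0⁺} [∫ c_α dπ_ε + ε · KL(π_ε ‖ ν₁⊗⋯⊗ν_m)] ≤ ∫ c_α dπ₀`. -/
theorem gamma_limsup {d m : ℕ} (hm : 0 < m)
    (𝒳 : Set (Euc d)) (h𝒳c : IsCompact 𝒳) (h𝒳b : ∀ x ∈ 𝒳, ∀ i, |x i| ≤ 1)
    (h𝒳int : (interior 𝒳).Nonempty)
    (ν : Fin m → Measure (Euc d)) (hν : ∀ j, IsProbabilityMeasure (ν j))
    (hνsupp : ∀ j, ν j 𝒳 = 1)
    (α : Fin m → ℝ) (hα : ∀ i, 0 ≤ α i) (hα1 : ∑ i, α i = 1)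
    (π₀ : Measure (Fin m → Euc d)) (hπ₀ : IsCoupling ν π₀) :
    ∃ π : ℝ → Measure (Fin m → Euc d),
      (∀ ε : ℝ, 0 < ε → IsCoupling ν (π ε) ∧ (π ε) ≪ Measure.pi ν) ∧
      (∀ f : BoundedContinuousFunction (Fin m → Euc d) ℝ,
        Tendsto (fun ε => ∫ x, f x ∂(π ε)) (𝓝[>] (0 : ℝ)) (𝓝 (∫ x, f x ∂π₀))) ∧
      limsup (fun ε => entCost α ε ν (π ε)) (𝓝[>] (0 : ℝ)) ≤
        ∫⁻ x, ENNReal.ofReal (costα α x) ∂π₀ :=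
  gamma_limsup_general 𝒳 h𝒳c h𝒳b ν hν hνsupp α π₀ hπ₀
end

section
/- Concentration of empirical multimarginal distributions: Let φ ∈ L^∞(ν_1⊗⋯⊗ν_m) satisfy ∫ φ d(ν_1⊗⋯⊗ν_m) = 0. Then for every t > 0, with probability at least 1 − 2e^{−t} (over the random samples), | ∫ φ d(ν̂_1^N ⊗ ⋯ ⊗ ν̂_m^N) | ≤ ‖φ‖_∞ √(2t/N). -/
open MeasureTheory ProbabilityTheory Filter Topology
open scoped ENNReal NNReal

/-- The empirical measure `N⁻¹ ∑_{k} δ_{x k}` of a point cloud `x`. -/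
noncomputable def empMeas {E : Type*} [MeasurableSpace E] {N : ℕ} (x : Fin N → E) :
    Measure E :=
  (N : ℝ≥0∞)⁻¹ • ∑ k : Fin N, Measure.dirac (x k)

/-!
By Hoeffding's lemma, `φ` evaluated at one sample from each marginal is sub-Gaussian with variance
proxy `B²`. The `N ^ m` terms of the V-statistic `∫ φ d(ν̂₁ ⊗ ⋯ ⊗ ν̂_m)` are not independent, but
for a fixed shift `c : Fin m → Fin N` the `N` terms indexed by `j ↦ c j + i`, `i : Fin N`, use
pairwise disjoint samples, so their average is sub-Gaussian with proxy `B² / N`. The V-statistic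
is the uniform average over `c` of these shifted averages, and by Jensen's inequality for `exp` a
convex combination of sub-Gaussian variables with a common proxy keeps that proxy. A two-sided
Chernoff bound concludes.
-/

open Real

namespace ProbabilityTheory

variable {Ω : Type*} {mΩ : MeasurableSpace Ω} {μ : Measure Ω}

lemma iIndepFun.curry {ι κ E : Type*} [MeasurableSpace E] {X : ι → κ → Ω → E}
    (hX : ∀ i j, Measurable (X i j)) (h : iIndepFun (fun p : ι × κ ↦ X p.1 p.2) μ) :
    iIndepFun (fun i ω j ↦ X i j ω) μ := by
  have := h.isProbabilityMeasure
  have : ∀ i j, IsProbabilityMeasure (μ.map (X i j)) :=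
    fun i j ↦ Measure.isProbabilityMeasure_map (hX i j).aemeasurable
  have hblock (i : ι) :
      μ.map (fun ω j ↦ X i j ω) = Measure.infinitePi (fun j ↦ μ.map (X i j)) := by
    have hrow := h.precomp (Prod.mk_right_injective i)
    exact (iIndepFun_iff_map_fun_eq_infinitePi_map (hX i)).1 hrow
  have hflat : μ.map (fun ω (p : ι × κ) ↦ X p.1 p.2 ω) =
      Measure.infinitePi fun p : ι × κ ↦ μ.map (X p.1 p.2) :=
    (iIndepFun_iff_map_fun_eq_infinitePi_map fun p : ι × κ ↦ hX p.1 p.2).1 h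
  rw [iIndepFun_iff_map_fun_eq_infinitePi_map (fun i ↦ by fun_prop)]
  calc μ.map (fun ω i j ↦ X i j ω)
      = (μ.map fun ω (p : ι × κ) ↦ X p.1 p.2 ω).map (MeasurableEquiv.curry ι κ E) := by
        rw [Measure.map_map (by fun_prop) (by fun_prop)]; rfl
    _ = Measure.infinitePi fun i ↦ Measure.infinitePi fun j ↦ μ.map (X i j) := by
        rw [hflat, Measure.infinitePi_map_curry fun i j ↦ μ.map (X i j)]
    _ = Measure.infinitePi fun i ↦ μ.map (fun ω j ↦ X i j ω) := by simp_rw [hblock]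

namespace HasSubgaussianMGF

lemma sum_mul_of_sum_eq_one {ι : Type*} {s : Finset ι} {X : ι → Ω → ℝ} {c : ℝ≥0}
    (h : ∀ i ∈ s, HasSubgaussianMGF (X i) c μ) {w : ι → ℝ} (hw₀ : ∀ i ∈ s, 0 ≤ w i)
    (hw₁ : ∑ i ∈ s, w i = 1) :
    HasSubgaussianMGF (fun ω ↦ ∑ i ∈ s, w i * X i ω) c μ := by
  have jensen (t : ℝ) (ω : Ω) :
      exp (t * ∑ i ∈ s, w i * X i ω) ≤ ∑ i ∈ s, w i * exp (t * X i ω) := by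
    simpa [Finset.mul_sum, mul_left_comm t] using
      convexOn_exp.map_sum_le hw₀ hw₁ fun i _ ↦ Set.mem_univ (t * X i ω)
  have hint (t : ℝ) : Integrable (fun ω ↦ ∑ i ∈ s, w i * exp (t * X i ω)) μ :=
    integrable_finsetSum _ fun i hi ↦ ((h i hi).integrable_exp_mul t).const_mul _
  have hmeas : AEMeasurable (fun ω ↦ ∑ i ∈ s, w i * X i ω) μ :=
    Finset.aemeasurable_fun_sum s fun i hi ↦ (h i hi).aemeasurable.const_mul (w i)
  refine ⟨fun t ↦ (hint t).mono' (hmeas.const_mul t).exp.aestronglyMeasurable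
    (ae_of_all _ fun ω ↦ ?_), fun t ↦ ?_⟩
  · rw [Real.norm_of_nonneg (exp_pos _).le]
    exact jensen t ω
  calc mgf (fun ω ↦ ∑ i ∈ s, w i * X i ω) μ t
      ≤ ∫ ω, ∑ i ∈ s, w i * exp (t * X i ω) ∂μ :=
        integral_mono_of_nonneg (ae_of_all _ fun ω ↦ (exp_pos _).le) (hint t)
          (ae_of_all _ (jensen t))
    _ = ∑ i ∈ s, w i * mgf (X i) μ t := by
        rw [integral_finsetSum _ fun i hi ↦ ((h i hi).integrable_exp_mul t).const_mul _]
        simp only [integral_const_mul, mgf]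
    _ ≤ ∑ i ∈ s, w i * exp (c * t ^ 2 / 2) := by
        gcongr with i hi
        · exact hw₀ i hi
        · exact (h i hi).mgf_le t
    _ = exp (c * t ^ 2 / 2) := by rw [← Finset.sum_mul, hw₁, one_mul]

lemma average_of_iIndepFun {ι : Type*} [Fintype ι] {X : ι → Ω → ℝ} {c : ℝ≥0}
    (hindep : iIndepFun X μ) (h : ∀ i, HasSubgaussianMGF (X i) c μ) :
    HasSubgaussianMGF (fun ω ↦ (Fintype.card ι : ℝ)⁻¹ * ∑ i, X i ω) (c / Fintype.card ι) μ := by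
  have H := (sum_of_iIndepFun hindep (s := .univ) fun i _ ↦ h i).const_mul
    (Fintype.card ι : ℝ)⁻¹
  refine ⟨H.integrable_exp_mul, fun t ↦ (H.mgf_le t).trans_eq ?_⟩
  change exp ((Fintype.card ι : ℝ)⁻¹ ^ 2 * ((∑ i : ι, c : ℝ≥0) : ℝ) * t ^ 2 / 2) = _
  rcases eq_or_ne (Fintype.card ι : ℝ) 0 with hcard | hcard
  · simp [hcard]
  · simp only [Finset.sum_const, Finset.card_univ, nsmul_eq_mul, NNReal.coe_mul, NNReal.coe_div,
      NNReal.coe_natCast]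
    field_simp

lemma one_sub_two_mul_exp_le_measure_abs_le [IsProbabilityMeasure μ] {X : Ω → ℝ} {c : ℝ≥0}
    (h : HasSubgaussianMGF X c μ) {t : ℝ} (ht : 0 ≤ t) :
    ENNReal.ofReal (1 - 2 * exp (-t)) ≤ μ {ω | |X ω| ≤ √(2 * c * t)} := by
  rcases eq_or_ne c 0 with rfl | hc
  -- the Chernoff bound degenerates to `exp (-ε ^ 2 / 0) = 1`, but then `X = 0` a.e.
  · have hX : ∀ᵐ ω ∂μ, |X ω| ≤ √(2 * ((0 : ℝ≥0) : ℝ) * t) :=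
      h.ae_eq_zero_of_hasSubgaussianMGF_zero.mono fun ω hω ↦ by simp [hω]
    rw [measure_congr (ae_eq_univ.mpr (ae_iff.mp hX) : {ω | |X ω| ≤ _} =ᵐ[μ] Set.univ),
      measure_univ]
    exact ENNReal.ofReal_le_one.mpr (by linarith [exp_pos (-t)])
  set ε := √(2 * c * t)
  have hε : -ε ^ 2 / (2 * c) = -t := by
    rw [Real.sq_sqrt (by positivity)]
    field_simp
  have hupper : μ.real {ω | ε ≤ X ω} ≤ exp (-t) := hε ▸ h.measure_ge_le (sqrt_nonneg _)
  have hlower : μ.real {ω | ε ≤ -X ω} ≤ exp (-t) := hε ▸ h.neg.measure_ge_le (sqrt_nonneg _)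
  have htail : {ω | |X ω| ≤ ε}ᶜ ⊆ {ω | ε ≤ X ω} ∪ {ω | ε ≤ -X ω} := by
    intro ω hω
    simp only [Set.mem_compl_iff, Set.mem_ofPred_eq, not_le, lt_abs] at hω
    rcases hω with hω | hω
    · exact Or.inl hω.le
    · exact Or.inr hω.le
  have hcover := measureReal_union_le (μ := μ) {ω | |X ω| ≤ ε} {ω | |X ω| ≤ ε}ᶜ
  rw [Set.union_compl_self, probReal_univ] at hcover
  have hcompl := (measureReal_mono htail).trans (measureReal_union_le (μ := μ) _ _)
  refine ENNReal.ofReal_le_of_le_toReal ?_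
  rw [← measureReal_def]
  linarith

end HasSubgaussianMGF

lemma hasSubgaussianMGF_of_abs_le_of_integral_eq_zero [IsProbabilityMeasure μ] {X : Ω → ℝ}
    {B : ℝ} (hX : AEMeasurable X μ) (hb : ∀ᵐ ω ∂μ, |X ω| ≤ B) (h0 : μ[X] = 0) :
    HasSubgaussianMGF X (‖B‖₊ ^ 2) μ := by
  convert hasSubgaussianMGF_of_mem_Icc_of_integral_eq_zero hX
    (hb.mono fun ω h ↦ abs_le.mp h) h0 using 2
  rw [sub_neg_eq_add, ← two_mul, nnnorm_mul]
  simp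

end ProbabilityTheory

lemma Fintype.sum_sum_shift {ι G M : Type*} [Fintype ι] [DecidableEq ι] [AddGroup G] [Fintype G]
    [AddCommMonoid M] (f : (ι → G) → M) :
    ∑ c : ι → G, ∑ i : G, f (fun j ↦ c j + i) = Fintype.card G • ∑ k, f k := by
  rw [Finset.sum_comm]
  have hshift (i : G) : ∑ c : ι → G, f (fun j ↦ c j + i) = ∑ k, f k :=
    Fintype.sum_equiv (Equiv.piCongrRight fun _ ↦ Equiv.addRight i) _ _ fun _ ↦ rfl
  simp only [hshift, Finset.sum_const, Finset.card_univ]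

lemma empMeas_eq_map_uniformOn {E : Type*} [MeasurableSpace E] {N : ℕ} (x : Fin N → E) :
    empMeas x = (uniformOn Set.univ).map x := by
  ext s hs
  rw [Measure.map_apply (measurable_of_finite x) hs, uniformOn_univ, empMeas,
    Measure.smul_apply, Measure.finsetSum_apply, Measure.count,
    Measure.sum_apply _ (measurable_of_finite x hs), tsum_fintype]
  simp only [Measure.dirac_apply' _ hs, Measure.dirac_apply' _ (measurable_of_finite x hs),
    smul_eq_mul, Fintype.card_fin, ENNReal.div_eq_inv_mul]
  rfl

lemma integral_uniformOn_univ {α E : Type*} [MeasurableSpace α] [MeasurableSingletonClass α]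
    [Fintype α] [NormedAddCommGroup E] [NormedSpace ℝ E] [CompleteSpace E] (f : α → E) :
    ∫ a, f a ∂uniformOn Set.univ = (Fintype.card α : ℝ)⁻¹ • ∑ a, f a := by
  rw [uniformOn, ProbabilityTheory.cond, integral_smul_measure, Measure.restrict_univ,
    integral_count]
  simp

lemma integral_pi_empMeas {E : Type*} [MeasurableSpace E] {m N : ℕ} [NeZero N]
    (x : Fin m → Fin N → E) {φ : (Fin m → E) → ℝ} (hφ : Measurable φ) :
    ∫ y, φ y ∂Measure.pi (fun j ↦ empMeas (x j)) =
      ((N : ℝ) ^ m)⁻¹ * ∑ k : Fin m → Fin N, φ (fun j ↦ x j (k j)) := by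
  have : IsProbabilityMeasure (uniformOn (Set.univ : Set (Fin N))) :=
    isProbabilityMeasure_uniformOn Set.finite_univ Set.univ_nonempty
  simp_rw [empMeas_eq_map_uniformOn]
  rw [← Measure.pi_map_pi (fun j ↦ (measurable_of_finite (x j)).aemeasurable), ← uniformOn_pi,
    Set.pi_univ, integral_map (measurable_of_finite _).aemeasurable hφ.aestronglyMeasurable,
    integral_uniformOn_univ]
  simp

section Sampling

variable {Ω E : Type*} {mΩ : MeasurableSpace Ω} [MeasurableSpace E] {μ : Measure Ω} {m N : ℕ}
  {X : Fin m → Fin N → Ω → E}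

lemma map_selection_eq_pi (hXm : ∀ j k, Measurable (X j k))
    (hXindep : iIndepFun (fun p : Fin m × Fin N ↦ X p.1 p.2) μ) {ν : Fin m → Measure E}
    (hXlaw : ∀ j k, μ.map (X j k) = ν j) (k : Fin m → Fin N) :
    μ.map (fun ω j ↦ X j (k j) ω) = Measure.pi ν := by
  have hsel := hXindep.precomp (g := fun j ↦ (j, k j)) fun _ _ h ↦ congrArg Prod.fst h
  rw [hsel.map_fun_eq_pi_map fun j ↦ (hXm j (k j)).aemeasurable]
  simp_rw [hXlaw]

lemma iIndepFun_shifted_selections [NeZero N] (hXm : ∀ j k, Measurable (X j k))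
    (hXindep : iIndepFun (fun p : Fin m × Fin N ↦ X p.1 p.2) μ) (c : Fin m → Fin N) :
    iIndepFun (fun (i : Fin N) ω j ↦ X j (c j + i) ω) μ := by
  have hinj : Function.Injective fun p : Fin N × Fin m ↦ (p.2, c p.2 + p.1) := by
    rintro ⟨i, j⟩ ⟨i', j'⟩ h
    simp only [Prod.mk.injEq] at h
    obtain ⟨rfl, h⟩ := h
    rw [add_left_cancel h]
  exact iIndepFun.curry (X := fun i j ↦ X j (c j + i)) (fun _ _ ↦ hXm _ _)
    (hXindep.precomp hinj)

end Sampling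

theorem empirical_multimarginal_concentration_general {d m : ℕ}
    (ν : Fin m → Measure (Euc d)) (hν : ∀ j, IsProbabilityMeasure (ν j))
    (Ω : Type) [MeasurableSpace Ω] (μ : Measure Ω) (hμ : IsProbabilityMeasure μ)
    (N : ℕ) (hN : 0 < N)
    (X : Fin m → Fin N → Ω → Euc d)
    (hXm : ∀ j k, Measurable (X j k))
    (hXlaw : ∀ j k, μ.map (X j k) = ν j)
    (hXindep : iIndepFun
      (fun (p : Fin m × Fin N) ω => X p.1 p.2 ω) μ)
    (φ : (Fin m → Euc d) → ℝ) (hφm : Measurable φ)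
    (B : ℝ) (hφb : ∀ᵐ x ∂(Measure.pi ν), |φ x| ≤ B)
    (hφ0 : ∫ x, φ x ∂(Measure.pi ν) = 0) :
    ∀ t : ℝ, 0 < t →
      ENNReal.ofReal (1 - 2 * Real.exp (-t)) ≤
        μ {ω | |∫ x, φ x ∂(Measure.pi (fun j => empMeas (fun k => X j k ω)))| ≤
          B * Real.sqrt (2 * t / N)} := by
  intro t ht
  have : NeZero N := ⟨hN.ne'⟩
  have hB : 0 ≤ B := by
    obtain ⟨x, hx⟩ := hφb.exists
    exact (abs_nonneg _).trans hx
  have hφ : HasSubgaussianMGF φ (‖B‖₊ ^ 2) (Measure.pi ν) :=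
    hasSubgaussianMGF_of_abs_le_of_integral_eq_zero hφm.aemeasurable hφb hφ0
  have hsel (k : Fin m → Fin N) :
      HasSubgaussianMGF (fun ω ↦ φ fun j ↦ X j (k j) ω) (‖B‖₊ ^ 2) μ :=
    .of_map (measurable_pi_lambda _ fun j ↦ hXm j (k j)).aemeasurable
      (by rwa [map_selection_eq_pi hXm hXindep hXlaw k])
  have hshift (c : Fin m → Fin N) : HasSubgaussianMGF
      (fun ω ↦ (N : ℝ)⁻¹ * ∑ i : Fin N, φ fun j ↦ X j (c j + i) ω) (‖B‖₊ ^ 2 / N) μ := by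
    simpa using HasSubgaussianMGF.average_of_iIndepFun
      ((iIndepFun_shifted_selections hXm hXindep c).comp (fun _ ↦ φ) fun _ ↦ hφm)
      fun i ↦ hsel fun j ↦ c j + i
  have hV : HasSubgaussianMGF
      (fun ω ↦ ∫ x, φ x ∂Measure.pi (fun j ↦ empMeas fun k ↦ X j k ω)) (‖B‖₊ ^ 2 / N) μ := by
    refine (HasSubgaussianMGF.sum_mul_of_sum_eq_one (s := .univ)
      (w := fun _ ↦ ((N : ℝ) ^ m)⁻¹) (fun c _ ↦ hshift c) (fun _ _ ↦ by positivity)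
      (by simp)).congr (ae_of_all _ fun ω ↦ ?_)
    dsimp only
    rw [integral_pi_empMeas (fun j k ↦ X j k ω) hφm, ← Finset.mul_sum, ← Finset.mul_sum,
      Fintype.sum_sum_shift (fun k ↦ φ fun j ↦ X j (k j) ω), Fintype.card_fin, nsmul_eq_mul,
      inv_mul_cancel_left₀ (NeZero.ne (N : ℝ))]
  have hparam : ((‖B‖₊ ^ 2 / N : ℝ≥0) : ℝ) = B ^ 2 / N := by simp
  have hradius : √(2 * (B ^ 2 / N) * t) = B * √(2 * t / N) := by
    rw [show 2 * (B ^ 2 / N) * t = B ^ 2 * (2 * t / N) by ring, sqrt_mul (sq_nonneg B),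
      sqrt_sq hB]
  have htail := hV.one_sub_two_mul_exp_le_measure_abs_le ht.le
  rwa [hparam, hradius] at htail

/-- **Concentration of empirical multimarginal distributions.** If
`φ ∈ L^∞(ν₁⊗⋯⊗ν_m)` has `∫ φ d(ν₁⊗⋯⊗ν_m) = 0`, then for every `t > 0`, with
probability at least `1 − 2e^{−t}` over i.i.d. samples `X j k ∼ ν j` (independent
across marginals), `|∫ φ d(ν̂₁^N ⊗ ⋯ ⊗ ν̂_m^N)| ≤ ‖φ‖_∞ √(2t/N)`. -/
theorem empirical_multimarginal_concentration {d m : ℕ} (hm : 0 < m)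
    (𝒳 : Set (Euc d)) (h𝒳c : IsCompact 𝒳) (h𝒳b : ∀ x ∈ 𝒳, ∀ i, |x i| ≤ 1)
    (h𝒳int : (interior 𝒳).Nonempty)
    (ν : Fin m → Measure (Euc d)) (hν : ∀ j, IsProbabilityMeasure (ν j))
    (hνsupp : ∀ j, ν j 𝒳 = 1)
    (Ω : Type) [MeasurableSpace Ω] (μ : Measure Ω) (hμ : IsProbabilityMeasure μ)
    (N : ℕ) (hN : 0 < N)
    (X : Fin m → Fin N → Ω → Euc d)
    (hXm : ∀ j k, Measurable (X j k))
    (hXlaw : ∀ j k, μ.map (X j k) = ν j)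
    (hXindep : iIndepFun
      (fun (p : Fin m × Fin N) ω => X p.1 p.2 ω) μ)
    (φ : (Fin m → Euc d) → ℝ) (hφm : Measurable φ)
    (B : ℝ) (hφb : ∀ᵐ x ∂(Measure.pi ν), |φ x| ≤ B)
    (hφ0 : ∫ x, φ x ∂(Measure.pi ν) = 0) :
    ∀ t : ℝ, 0 < t →
      ENNReal.ofReal (1 - 2 * Real.exp (-t)) ≤
        μ {ω | |∫ x, φ x ∂(Measure.pi (fun j => empMeas (fun k => X j k ω)))| ≤
          B * Real.sqrt (2 * t / N)} :=
  empirical_multimarginal_concentration_general ν hν Ω μ hμ N hN X hXm hXlaw hXindep φ hφm B hφb hφ0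
end

section
/- Bound on empirical potential functions via the Polyak–Łojasiewicz inequality: Let Φ̂_{α,ε}(f) = Σ_{j=1}^m ∫ f_j dν̂_j^N − ε ∫ exp((Σ_j f_j(x_j) − c_α(x))/ε) d(ν̂_1^N⊗⋯⊗ν̂_m^N) be the empirical dual objective, with empirical gradient norm ‖∇Φ̂_{α,ε}(f)‖²_{𝓛̂_m} = Σ_{j=1}^m ∫ [ ∫ (1 − exp((Σ_i f_i(x_i) − c_α(x))/ε)) d(⊗_{k≠j}ν̂_k^N) ]² dν̂_j^N and norm ‖g‖²_{𝓛̂_m} = Σ_j ∫ g_j² dν̂_j^N. Let Ŝ_L = { f : ‖Σ_j f_j‖_{L^∞(⊗_k ν̂_k^N)} ≤ L, ∫ f_i dν̂_i^N = 0 for i ∈ {1,…,m−1} }. Suppose ĝ ∈ Ŝ_{2‖c_α‖_∞} maximizes Φ̂_{α,ε} and f ∈ Ŝ_{2‖c_α‖_∞}. Then ‖ĝ − f‖²_{𝓛̂_m} ≤ ε² exp(6‖c_α‖_∞/ε) · ‖∇Φ̂_{α,ε}(f)‖²_{𝓛̂_m}. -/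
open MeasureTheory ProbabilityTheory Filter Topology
open scoped ENNReal NNReal

/-- The empirical dual objective `Φ̂_{α,ε}` built from point clouds `x j : Fin N → Euc d`. -/
noncomputable def empDualObj {m d N : ℕ} (α : Fin m → ℝ) (ε : ℝ)
    (x : Fin m → Fin N → Euc d) (f : Fin m → Euc d → ℝ) : ℝ :=
  ∑ j, ∫ s, f j s ∂(empMeas (x j))
    - ε * ∫ y, Real.exp ((∑ j, f j (y j) - costα α y) / ε)
        ∂(Measure.pi (fun j => empMeas (x j)))

namespace EmpPL

lemma integrable_dirac'' {E : Type*} [MeasurableSpace E] [MeasurableSingletonClass E]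
    (f : E → ℝ) (a : E) : Integrable f (Measure.dirac a) := by
  have h : f =ᵐ[Measure.dirac a] fun _ => f a := by
    rw [ae_dirac_eq]; exact eventually_pure.2 rfl
  exact (integrable_congr h).2 (integrable_const _)

lemma empMeas_integral {E : Type*} [MeasurableSpace E] [MeasurableSingletonClass E]
    {N : ℕ} (v : Fin N → E) (h : E → ℝ) :
    ∫ s, h s ∂(empMeas v) = (N : ℝ)⁻¹ * ∑ k, h (v k) := by
  unfold empMeas
  rw [integral_smul_measure, integral_finset_sum_measure (fun k _ => integrable_dirac'' h (v k))]
  simp [integral_dirac, smul_eq_mul]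

instance {E : Type*} [MeasurableSpace E] {N : ℕ} (v : Fin N → E) :
    IsFiniteMeasure (empMeas v) := by
  constructor
  unfold empMeas
  rw [Measure.smul_apply, Measure.coe_finset_sum]
  simp only [Finset.sum_apply, Measure.dirac_apply_of_mem (Set.mem_univ _)]
  simp only [Finset.sum_const, Finset.card_univ, Fintype.card_fin, nsmul_eq_mul, mul_one,
    smul_eq_mul]
  rcases Nat.eq_zero_or_pos N with h | h
  · simp [h]
  · rw [ENNReal.inv_mul_cancel (by exact_mod_cast h.ne') (by simp)]
    exact ENNReal.one_lt_top

lemma pi_empMeas {d m N : ℕ} (x : Fin m → Fin N → Euc d) :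
    Measure.pi (fun j => empMeas (x j)) =
      ((N : ℝ≥0∞) ^ m)⁻¹ • ∑ κ : Fin m → Fin N, Measure.dirac (fun j => x j (κ j)) := by
  classical
  refine (Measure.pi_eq fun s hs => ?_)
  rw [Measure.smul_apply, Measure.coe_finset_sum]
  simp only [Finset.sum_apply]
  have hd : ∀ κ : Fin m → Fin N, Measure.dirac (fun j => x j (κ j)) (Set.pi Set.univ s)
      = ∏ j, (if x j (κ j) ∈ s j then (1:ℝ≥0∞) else 0) := by
    intro κ
    rw [Measure.dirac_apply' _ (MeasurableSet.univ_pi hs)]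
    by_cases hmem : (fun j => x j (κ j)) ∈ Set.pi Set.univ s
    · rw [Set.indicator_of_mem hmem]
      rw [Set.mem_univ_pi] at hmem
      simp [hmem]
    · rw [Set.indicator_of_notMem hmem]
      rw [Set.mem_univ_pi] at hmem
      push_neg at hmem
      obtain ⟨j, hj⟩ := hmem
      exact (Finset.prod_eq_zero (Finset.mem_univ j) (by simp [hj])).symm
  simp_rw [hd]
  have hps := Finset.prod_univ_sum (fun _ : Fin m => (Finset.univ : Finset (Fin N)))
    (fun j k => if x j k ∈ s j then (1:ℝ≥0∞) else 0)
  rw [Fintype.piFinset_univ] at hps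
  rw [← hps]
  have he : ∀ j, empMeas (x j) (s j) = (N : ℝ≥0∞)⁻¹ *
      ∑ k, (if x j k ∈ s j then (1:ℝ≥0∞) else 0) := by
    intro j
    unfold empMeas
    rw [Measure.smul_apply, Measure.coe_finset_sum]
    simp only [Finset.sum_apply, smul_eq_mul]
    congr 1
    exact Finset.sum_congr rfl fun k _ => by rw [Measure.dirac_apply' _ (hs j)]; simp [Set.indicator_apply]
  simp_rw [he]
  rw [Finset.prod_mul_distrib, Finset.prod_const, Finset.card_univ, Fintype.card_fin,
    ← ENNReal.inv_pow, smul_eq_mul]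

lemma integral_pi_empMeas {d m N : ℕ} (x : Fin m → Fin N → Euc d)
    (φ : (Fin m → Euc d) → ℝ) :
    ∫ y, φ y ∂(Measure.pi fun j => empMeas (x j)) =
      ((N : ℝ) ^ m)⁻¹ * ∑ κ : Fin m → Fin N, φ (fun j => x j (κ j)) := by
  rw [pi_empMeas x, integral_smul_measure,
    integral_finset_sum_measure (fun κ _ => integrable_dirac'' φ _)]
  simp [integral_dirac, smul_eq_mul, ENNReal.toReal_inv]

lemma sum_update {m N : ℕ} (j : Fin m) (u : Fin N → ℝ) (W : (Fin m → Fin N) → ℝ) :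
    ∑ k, ∑ κ : Fin m → Fin N, u k * W (Function.update κ j k)
      = N * ∑ κ : Fin m → Fin N, u (κ j) * W κ := by
  classical
  have h1 : (N : ℝ) * ∑ κ : Fin m → Fin N, u (κ j) * W κ
      = ∑ _k : Fin N, ∑ κ : Fin m → Fin N, u (κ j) * W κ := by
    rw [Finset.sum_const, Finset.card_univ, Fintype.card_fin, nsmul_eq_mul]
  rw [h1, ← Finset.sum_product', ← Finset.sum_product']
  refine Finset.sum_nbij' (fun p => (p.2 j, Function.update p.2 j p.1))
    (fun p => (p.2 j, Function.update p.2 j p.1)) (by simp) (by simp) ?_ ?_ ?_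
  · rintro ⟨k, κ⟩ _
    simp [Function.update_idem, Function.update_self, Function.update_eq_self]
  · rintro ⟨k, κ⟩ _
    simp [Function.update_idem, Function.update_self, Function.update_eq_self]
  · rintro ⟨k, κ⟩ _
    simp [Function.update_self]

lemma sum_fn_prod {m N : ℕ} (u : Fin m → Fin N → ℝ) :
    ∑ κ : Fin m → Fin N, ∏ l, u l (κ l) = ∏ l, ∑ k, u l k := by
  classical
  rw [Finset.prod_univ_sum]
  rw [Fintype.piFinset_univ]

lemma exp_mono_bound {a b M : ℝ} (ha : -M ≤ a) (hb : -M ≤ b) :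
    Real.exp (-M) * (a - b) ^ 2 ≤ (a - b) * (Real.exp a - Real.exp b) := by
  rcases le_total b a with h | h
  · have h1 : Real.exp a = Real.exp b * Real.exp (a - b) := by
      rw [← Real.exp_add]; ring_nf
    have h2 : a - b + 1 ≤ Real.exp (a - b) := Real.add_one_le_exp _
    have h3 : Real.exp (-M) ≤ Real.exp b := Real.exp_le_exp.2 hb
    have h4 : (0:ℝ) < Real.exp b := Real.exp_pos _
    have h5 : (0:ℝ) ≤ a - b := sub_nonneg.2 h
    calc Real.exp (-M) * (a - b) ^ 2 ≤ Real.exp b * (a - b) ^ 2 :=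
          mul_le_mul_of_nonneg_right h3 (sq_nonneg _)
      _ ≤ (a - b) * (Real.exp a - Real.exp b) := by
          nlinarith [mul_le_mul_of_nonneg_left (by linarith : a - b ≤ Real.exp (a-b) - 1)
            (mul_nonneg h5 h4.le)]
  · have h1 : Real.exp b = Real.exp a * Real.exp (b - a) := by
      rw [← Real.exp_add]; ring_nf
    have h2 : b - a + 1 ≤ Real.exp (b - a) := Real.add_one_le_exp _
    have h3 : Real.exp (-M) ≤ Real.exp a := Real.exp_le_exp.2 ha
    have h4 : (0:ℝ) < Real.exp a := Real.exp_pos _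
    have h5 : (0:ℝ) ≤ b - a := sub_nonneg.2 h
    have key : Real.exp (-M) * (b - a) ^ 2 ≤ (b - a) * (Real.exp b - Real.exp a) := by
      calc Real.exp (-M) * (b - a) ^ 2 ≤ Real.exp a * (b - a) ^ 2 :=
            mul_le_mul_of_nonneg_right h3 (sq_nonneg _)
        _ ≤ (b - a) * (Real.exp b - Real.exp a) := by
            nlinarith [mul_le_mul_of_nonneg_left (by linarith : b - a ≤ Real.exp (b-a) - 1)
              (mul_nonneg h5 h4.le)]
    nlinarith [key]

end EmpPL


set_option maxHeartbeats 2000000 in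
/-- **Bound on empirical potential functions via the Polyak–Łojasiewicz inequality.**
If `ĝ ∈ Ŝ_{2‖c_α‖_∞}` maximizes the empirical dual objective `Φ̂_{α,ε}` and
`f ∈ Ŝ_{2‖c_α‖_∞}`, then
`‖ĝ − f‖²_{𝓛̂_m} ≤ ε² exp(6‖c_α‖_∞/ε) ‖∇Φ̂_{α,ε}(f)‖²_{𝓛̂_m}`. -/
theorem empirical_potential_PL_bound {d m : ℕ} (hm : 0 < m)
    (𝒳 : Set (Euc d)) (h𝒳c : IsCompact 𝒳) (h𝒳b : ∀ x ∈ 𝒳, ∀ i, |x i| ≤ 1)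
    (h𝒳int : (interior 𝒳).Nonempty)
    (α : Fin m → ℝ) (hα : ∀ i, 0 ≤ α i) (hα1 : ∑ i, α i = 1)
    (ε : ℝ) (hε : 0 < ε)
    (N : ℕ) (hN : 0 < N)
    (x : Fin m → Fin N → Euc d) (hx : ∀ j k, x j k ∈ 𝒳)
    (Mc : ℝ)
    (hMc : ∀ y : Fin m → Euc d, (∀ j, ∃ k, y j = x j k) → costα α y ≤ Mc)
    (f g : Fin m → Euc d → ℝ)
    (hfm : ∀ j, Measurable (f j)) (hgm : ∀ j, Measurable (g j))
    (hfS : ∀ y : Fin m → Euc d, (∀ j, ∃ k, y j = x j k) → |∑ j, f j (y j)| ≤ 2 * Mc)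
    (hfnorm : ∀ i : Fin m, (i : ℕ) + 1 < m → ∫ s, f i s ∂(empMeas (x i)) = 0)
    (hgS : ∀ y : Fin m → Euc d, (∀ j, ∃ k, y j = x j k) → |∑ j, g j (y j)| ≤ 2 * Mc)
    (hgnorm : ∀ i : Fin m, (i : ℕ) + 1 < m → ∫ s, g i s ∂(empMeas (x i)) = 0)
    (hgmax : ∀ h : Fin m → Euc d → ℝ, (∀ j, Measurable (h j)) →
      empDualObj α ε x h ≤ empDualObj α ε x g) :
    ∑ j, ∫ s, (g j s - f j s) ^ 2 ∂(empMeas (x j)) ≤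
      ε ^ 2 * Real.exp (6 * Mc / ε) *
        ∑ j, ∫ s, (∫ y, (1 - Real.exp ((∑ i, f i (Function.update y j s i)
            - costα α (Function.update y j s)) / ε))
          ∂(Measure.pi (fun i => empMeas (x i)))) ^ 2 ∂(empMeas (x j)) := by
  classical
  -- local definitions
  let F : (Fin m → Fin N) → ℝ := fun κ => ∑ i, f i (x i (κ i))
  let G : (Fin m → Fin N) → ℝ := fun κ => ∑ i, g i (x i (κ i))
  let cc : (Fin m → Fin N) → ℝ := fun κ => costα α (fun i => x i (κ i))
  let Ef : (Fin m → Fin N) → ℝ := fun κ => Real.exp ((F κ - cc κ) / ε)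
  let Eg : (Fin m → Fin N) → ℝ := fun κ => Real.exp ((G κ - cc κ) / ε)
  have hFdef : ∀ κ, F κ = ∑ i, f i (x i (κ i)) := fun _ => rfl
  have hGdef : ∀ κ, G κ = ∑ i, g i (x i (κ i)) := fun _ => rfl
  have hccdef : ∀ κ, cc κ = costα α (fun i => x i (κ i)) := fun _ => rfl
  have hEfdef : ∀ κ, Ef κ = Real.exp ((F κ - cc κ) / ε) := fun _ => rfl
  have hEgdef : ∀ κ, Eg κ = Real.exp ((G κ - cc κ) / ε) := fun _ => rfl
  have hNR : (0:ℝ) < N := by exact_mod_cast hN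
  have hNm : (0:ℝ) < (N:ℝ) ^ m := pow_pos hNR m
  have hFb : ∀ κ, |F κ| ≤ 2 * Mc := fun κ => by
    simpa [hFdef] using hfS (fun i => x i (κ i)) (fun j => ⟨κ j, rfl⟩)
  have hGb : ∀ κ, |G κ| ≤ 2 * Mc := fun κ => by
    simpa [hGdef] using hgS (fun i => x i (κ i)) (fun j => ⟨κ j, rfl⟩)
  have hc0 : ∀ κ, 0 ≤ cc κ := by
    intro κ
    rw [hccdef]
    unfold costα
    refine Finset.sum_nonneg fun i _ => Finset.sum_nonneg fun j _ => ?_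
    split
    · positivity
    · exact le_rfl
  have hcM : ∀ κ, cc κ ≤ Mc := fun κ => hMc (fun i => x i (κ i)) (fun j => ⟨κ j, rfl⟩)
  -- the dual objective in finite-sum form
  have hΦ : ∀ h : Fin m → Euc d → ℝ, empDualObj α ε x h
      = (∑ j, (N:ℝ)⁻¹ * ∑ k, h j (x j k))
        - ε * (((N:ℝ) ^ m)⁻¹ * ∑ κ : Fin m → Fin N,
            Real.exp ((∑ i, h i (x i (κ i)) - costα α (fun i => x i (κ i))) / ε)) := by
    intro h
    unfold empDualObj
    rw [EmpPL.integral_pi_empMeas]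
    congr 1
    exact Finset.sum_congr rfl fun j _ => EmpPL.empMeas_integral (x j) (h j)
  -- first-order condition at the maximizer g
  have hFOC : ∀ (j : Fin m) (k : Fin N),
      ∑ κ : Fin m → Fin N, Eg (Function.update κ j k) = (N:ℝ) ^ m := by
    intro j k
    have key : ∀ t : ℝ, t * ((N:ℝ)⁻¹ * ∑ k', (if x j k' = x j k then (1:ℝ) else 0))
        ≤ ε * ((Real.exp (t/ε) - 1) *
          (((N:ℝ) ^ m)⁻¹ * ∑ κ : Fin m → Fin N,
            (if x j (κ j) = x j k then (1:ℝ) else 0) * Eg κ)) := by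
      intro t
      set ht : Fin m → Euc d → ℝ :=
        fun i s => if i = j then g j s + (if s = x j k then t else 0) else g i s with hht
      have hmeas : ∀ i, Measurable (ht i) := by
        intro i
        rcases eq_or_ne i j with rfl | hij
        · simp only [hht, if_pos rfl]
          exact (hgm i).add
            (Measurable.ite (measurableSet_eq) measurable_const measurable_const)
        · simpa [hht, hij] using hgm i
      have hle := hgmax ht hmeas
      rw [hΦ ht, hΦ g] at hle
      have hlin : ∑ i, (N:ℝ)⁻¹ * ∑ k', ht i (x i k')
          = (∑ i, (N:ℝ)⁻¹ * ∑ k', g i (x i k'))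
            + t * ((N:ℝ)⁻¹ * ∑ k', (if x j k' = x j k then (1:ℝ) else 0)) := by
        have h1 : ∀ i, (N:ℝ)⁻¹ * ∑ k', ht i (x i k')
            = (N:ℝ)⁻¹ * ∑ k', g i (x i k')
              + (if i = j then t * ((N:ℝ)⁻¹ * ∑ k', (if x j k' = x j k then (1:ℝ) else 0)) else 0) := by
          intro i
          rcases eq_or_ne i j with rfl | hij
          · simp only [if_pos rfl, hht]
            rw [Finset.sum_add_distrib]
            have e3 : ∑ k', (if x i k' = x i k then t else 0)
                = t * ∑ k', (if x i k' = x i k then (1:ℝ) else 0) := by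
              rw [Finset.mul_sum]
              exact Finset.sum_congr rfl fun k' _ => by split <;> ring
            rw [e3]
            simp only [eq_self_iff_true, if_true]
            ring
          · simp [hht, hij]
        rw [Finset.sum_congr rfl fun i _ => h1 i, Finset.sum_add_distrib,
          Finset.sum_ite_eq' Finset.univ j]
        simp
      have hexp : ∑ κ : Fin m → Fin N,
            Real.exp ((∑ i, ht i (x i (κ i)) - costα α (fun i => x i (κ i))) / ε)
          = (∑ κ : Fin m → Fin N,
              Real.exp ((∑ i, g i (x i (κ i)) - costα α (fun i => x i (κ i))) / ε))
            + (Real.exp (t/ε) - 1) * ∑ κ : Fin m → Fin N,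
                (if x j (κ j) = x j k then (1:ℝ) else 0) * Eg κ := by
        rw [Finset.mul_sum, ← Finset.sum_add_distrib]
        refine Finset.sum_congr rfl fun κ _ => ?_
        have e1 : ∑ i, ht i (x i (κ i))
            = (∑ i, g i (x i (κ i))) + (if x j (κ j) = x j k then t else 0) := by
          have e0 : ∀ i, ht i (x i (κ i)) = g i (x i (κ i))
              + (if i = j then (if x j (κ j) = x j k then t else 0) else 0) := by
            intro i
            rcases eq_or_ne i j with rfl | hij
            · simp [hht]
            · simp [hht, hij]
          rw [Finset.sum_congr rfl fun i _ => e0 i, Finset.sum_add_distrib,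
            Finset.sum_ite_eq' Finset.univ j]
          simp
        rw [e1]
        rcases eq_or_ne (x j (κ j)) (x j k) with hq | hq
        · rw [if_pos hq, if_pos hq]
          rw [← hGdef κ, ← hccdef κ]
          have e2 : (G κ + t - cc κ) / ε = (G κ - cc κ) / ε + t / ε := by ring
          rw [e2, Real.exp_add, ← hEgdef κ]
          ring
        · rw [if_neg hq, if_neg hq, add_zero, ← hGdef κ, ← hccdef κ, ← hEgdef κ]
          ring
      rw [hlin, hexp] at hle
      have expand : ((N:ℝ) ^ m)⁻¹ * ((∑ κ : Fin m → Fin N,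
              Real.exp ((∑ i, g i (x i (κ i)) - costα α (fun i => x i (κ i))) / ε))
            + (Real.exp (t/ε) - 1) * ∑ κ : Fin m → Fin N,
                (if x j (κ j) = x j k then (1:ℝ) else 0) * Eg κ)
          = ((N:ℝ) ^ m)⁻¹ * (∑ κ : Fin m → Fin N,
              Real.exp ((∑ i, g i (x i (κ i)) - costα α (fun i => x i (κ i))) / ε))
            + (Real.exp (t/ε) - 1) * (((N:ℝ) ^ m)⁻¹ * ∑ κ : Fin m → Fin N,
                (if x j (κ j) = x j k then (1:ℝ) else 0) * Eg κ) := by ring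
      rw [expand] at hle
      linarith [hle]
    set B0 : ℝ := (N:ℝ)⁻¹ * ∑ k', (if x j k' = x j k then (1:ℝ) else 0) with hB0
    set C0 : ℝ := ((N:ℝ) ^ m)⁻¹ * ∑ κ : Fin m → Fin N,
        (if x j (κ j) = x j k then (1:ℝ) else 0) * Eg κ with hC0
    have hslope : Filter.Tendsto (fun s : ℝ => C0 * ((Real.exp s - 1)/s))
        (nhdsWithin (0:ℝ) {(0:ℝ)}ᶜ) (nhds C0) := by
      have h1 := hasDerivAt_iff_tendsto_slope.mp (Real.hasDerivAt_exp 0)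
      rw [Real.exp_zero] at h1
      have h2 := h1.const_mul C0
      rw [mul_one] at h2
      refine Filter.Tendsto.congr (fun s => ?_) h2
      rw [slope_def_field]
      simp [Real.exp_zero]
    have hBC1 : B0 ≤ C0 := by
      have hev : ∀ᶠ s in nhdsWithin (0:ℝ) (Set.Ioi 0), B0 ≤ C0 * ((Real.exp s - 1)/s) := by
        filter_upwards [self_mem_nhdsWithin] with s hs
        have hs0 : (0:ℝ) < s := hs
        have hk := key (ε * s)
        rw [show ε * s / ε = s by field_simp] at hk
        have h2 : s * B0 ≤ (Real.exp s - 1) * C0 := by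
          nlinarith [hk, hε]
        rw [mul_comm C0, div_mul_eq_mul_div, le_div_iff₀ hs0]
        nlinarith [h2]
      have hmono1 : nhdsWithin (0:ℝ) (Set.Ioi 0) ≤ nhdsWithin (0:ℝ) {(0:ℝ)}ᶜ :=
        nhdsWithin_mono 0 (fun s hs => ne_of_gt hs)
      exact ge_of_tendsto (hslope.mono_left hmono1) hev
    have hBC2 : C0 ≤ B0 := by
      have hev : ∀ᶠ s in nhdsWithin (0:ℝ) (Set.Iio 0), C0 * ((Real.exp s - 1)/s) ≤ B0 := by
        filter_upwards [self_mem_nhdsWithin] with s hs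
        have hs0 : s < (0:ℝ) := hs
        have hk := key (ε * s)
        rw [show ε * s / ε = s by field_simp] at hk
        have h2 : s * B0 ≤ (Real.exp s - 1) * C0 := by
          nlinarith [hk, hε]
        rw [mul_comm C0, div_mul_eq_mul_div, div_le_iff_of_neg hs0]
        nlinarith [h2]
      have hmono1 : nhdsWithin (0:ℝ) (Set.Iio 0) ≤ nhdsWithin (0:ℝ) {(0:ℝ)}ᶜ :=
        nhdsWithin_mono 0 (fun s hs => ne_of_lt hs)
      exact le_of_tendsto (hslope.mono_left hmono1) hev
    have hBC : B0 = C0 := le_antisymm hBC1 hBC2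
    -- now extract the pointwise condition
    have hsu := EmpPL.sum_update j (fun k' => if x j k' = x j k then (1:ℝ) else 0) Eg
    have hL : ∑ k', ∑ κ : Fin m → Fin N,
          (if x j k' = x j k then (1:ℝ) else 0) * Eg (Function.update κ j k')
        = (∑ k', if x j k' = x j k then (1:ℝ) else 0)
            * ∑ κ : Fin m → Fin N, Eg (Function.update κ j k) := by
      rw [Finset.sum_mul]
      refine Finset.sum_congr rfl fun k' _ => ?_
      rcases eq_or_ne (x j k') (x j k) with hq | hq
      · rw [if_pos hq]
        simp only [one_mul]
        refine Finset.sum_congr rfl fun κ _ => ?_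
        have hYeq : (fun i => x i (Function.update κ j k' i))
            = (fun i => x i (Function.update κ j k i)) := by
          funext i
          rcases eq_or_ne i j with rfl | hij
          · simp [hq]
          · simp [Function.update_of_ne hij]
        rw [hEgdef, hEgdef]
        refine congrArg Real.exp ?_
        have h1 : ∑ i, g i (x i (Function.update κ j k' i))
            = ∑ i, g i (x i (Function.update κ j k i)) :=
          Finset.sum_congr rfl fun i _ => by
            rcases eq_or_ne i j with rfl | hij
            · simp [hq]
            · simp [Function.update_of_ne hij]
        have h2 : costα α (fun i => x i (Function.update κ j k' i))
            = costα α (fun i => x i (Function.update κ j k i)) := by rw [hYeq]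
        rw [hGdef, hGdef, hccdef, hccdef, h1, h2]
      · rw [if_neg hq]
        simp
    have hcnt : (1:ℝ) ≤ ∑ k', (if x j k' = x j k then (1:ℝ) else 0) := by
      have := Finset.single_le_sum
        (f := fun k' => if x j k' = x j k then (1:ℝ) else 0)
        (fun k' _ => by by_cases h : x j k' = x j k <;> simp [h]) (Finset.mem_univ k)
      simpa using this
    have hCval : ∑ κ : Fin m → Fin N, (if x j (κ j) = x j k then (1:ℝ) else 0) * Eg κ
        = (N:ℝ) ^ m * C0 := by
      rw [hC0]
      field_simp
    have hBval : ∑ k', (if x j k' = x j k then (1:ℝ) else 0) = (N:ℝ) * B0 := by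
      rw [hB0]
      field_simp
    -- from hsu : (Σ ite) * (Σ Eg upd) = N * (Σ ite(κj) Eg)
    have hfin : ((N:ℝ) * B0) * ∑ κ : Fin m → Fin N, Eg (Function.update κ j k)
        = (N:ℝ) * ((N:ℝ) ^ m * C0) := by
      rw [← hBval, ← hCval, ← hL]
      exact hsu
    have hB0pos : 0 < B0 := by
      rw [hB0]
      exact mul_pos (inv_pos.2 hNR) (lt_of_lt_of_le one_pos hcnt)
    have hXeq : B0 * (∑ κ : Fin m → Fin N, Eg (Function.update κ j k))
        = B0 * (N:ℝ) ^ m := by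
      have h9 : (N:ℝ) * (B0 * ∑ κ : Fin m → Fin N, Eg (Function.update κ j k))
          = (N:ℝ) * (B0 * (N:ℝ) ^ m) := by
        rw [hBC] at hfin ⊢
        linear_combination hfin
      exact mul_left_cancel₀ (ne_of_gt hNR) h9
    exact mul_left_cancel₀ (ne_of_gt hB0pos) hXeq
  -- gradient components of f
  let T : Fin m → Fin N → ℝ := fun j k =>
    ((N:ℝ) ^ m)⁻¹ * ∑ κ : Fin m → Fin N, (1 - Ef (Function.update κ j k))
  have hTdef : ∀ j k, T j k
      = ((N:ℝ) ^ m)⁻¹ * ∑ κ : Fin m → Fin N, (1 - Ef (Function.update κ j k)) :=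
    fun _ _ => rfl
  have hcard : ∑ κ : Fin m → Fin N, (1:ℝ) = (N:ℝ) ^ m := by
    rw [Finset.sum_const, Finset.card_univ]
    simp [Fintype.card_fun]
  have hTEg : ∀ j k, T j k = ((N:ℝ) ^ m)⁻¹ *
      ∑ κ : Fin m → Fin N, (Eg (Function.update κ j k) - Ef (Function.update κ j k)) := by
    intro j k
    rw [hTdef]
    congr 1
    rw [Finset.sum_sub_distrib, Finset.sum_sub_distrib, hcard, hFOC j k]
  -- conversion of the goal to finite sums
  have hgoalL : ∑ j, ∫ s, (g j s - f j s) ^ 2 ∂(empMeas (x j))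
      = ∑ j, (N:ℝ)⁻¹ * ∑ k, (g j (x j k) - f j (x j k)) ^ 2 :=
    Finset.sum_congr rfl fun j _ => EmpPL.empMeas_integral (x j) _
  have hinner : ∀ (j : Fin m) (k : Fin N),
      (∫ y, (1 - Real.exp ((∑ i, f i (Function.update y j (x j k) i)
          - costα α (Function.update y j (x j k))) / ε))
        ∂(Measure.pi (fun i => empMeas (x i)))) = T j k := by
    intro j k
    rw [EmpPL.integral_pi_empMeas, hTdef]
    congr 1
    refine Finset.sum_congr rfl fun κ _ => ?_
    have h1 : Function.update (fun i => x i (κ i)) j (x j k)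
        = fun i => x i (Function.update κ j k i) := by
      funext i
      rcases eq_or_ne i j with rfl | hij
      · simp
      · simp [Function.update_of_ne hij]
    simp only [h1, hEfdef, hFdef, hccdef]
  have hgoalR' : ∑ j, ∫ s, (∫ y, (1 - Real.exp ((∑ i, f i (Function.update y j s i)
          - costα α (Function.update y j s)) / ε))
        ∂(Measure.pi (fun i => empMeas (x i)))) ^ 2 ∂(empMeas (x j))
      = ∑ j, (N:ℝ)⁻¹ * ∑ k, (T j k) ^ 2 := by
    refine Finset.sum_congr rfl fun j _ => ?_
    rw [EmpPL.empMeas_integral]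
    congr 1
    exact Finset.sum_congr rfl fun k _ => by rw [hinner j k]
  -- inner product identity
  have hIj : ∀ j : Fin m, (N:ℝ)⁻¹ * ∑ k, (g j (x j k) - f j (x j k)) * T j k
      = ((N:ℝ) ^ m)⁻¹ * ∑ κ : Fin m → Fin N,
          (g j (x j (κ j)) - f j (x j (κ j))) * (Eg κ - Ef κ) := by
    intro j
    have hsu' : ∑ k, ∑ κ : Fin m → Fin N, (g j (x j k) - f j (x j k))
          * (Eg (Function.update κ j k) - Ef (Function.update κ j k))
        = (N:ℝ) * ∑ κ : Fin m → Fin N,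
            (g j (x j (κ j)) - f j (x j (κ j))) * (Eg κ - Ef κ) :=
      EmpPL.sum_update j (fun k => g j (x j k) - f j (x j k)) (fun κ => Eg κ - Ef κ)
    have h1 : ∑ k, (g j (x j k) - f j (x j k)) * T j k
        = ((N:ℝ) ^ m)⁻¹ * ∑ k, ∑ κ : Fin m → Fin N, (g j (x j k) - f j (x j k))
            * (Eg (Function.update κ j k) - Ef (Function.update κ j k)) := by
      simp only [hTEg j, Finset.mul_sum]
      refine Finset.sum_congr rfl fun k _ => Finset.sum_congr rfl fun κ _ => by ring
    rw [h1, hsu']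
    have hNne : (N:ℝ) ≠ 0 := ne_of_gt hNR
    field_simp
  have hIeq : ∑ j, (N:ℝ)⁻¹ * ∑ k, (g j (x j k) - f j (x j k)) * T j k
      = ((N:ℝ) ^ m)⁻¹ * ∑ κ : Fin m → Fin N, (G κ - F κ) * (Eg κ - Ef κ) := by
    rw [Finset.sum_congr rfl fun j _ => hIj j, ← Finset.mul_sum, Finset.sum_comm]
    refine congrArg (fun z => ((N:ℝ) ^ m)⁻¹ * z) (Finset.sum_congr rfl fun κ _ => ?_)
    rw [← Finset.sum_mul]
    congr 1
    rw [hGdef, hFdef, Finset.sum_sub_distrib]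
  -- strong monotonicity
  let K : ℝ := ε⁻¹ * Real.exp (-(3 * Mc / ε))
  have hKdef : K = ε⁻¹ * Real.exp (-(3 * Mc / ε)) := rfl
  have hKpos : 0 < K := by rw [hKdef]; positivity
  have hmono : ∀ κ : Fin m → Fin N,
      K * (G κ - F κ) ^ 2 ≤ (G κ - F κ) * (Eg κ - Ef κ) := by
    intro κ
    have h3 : -(3 * Mc) ≤ G κ - cc κ := by
      have h31 := (abs_le.mp (hGb κ)).1
      have h32 := hcM κ
      linarith
    have h4 : -(3 * Mc) ≤ F κ - cc κ := by
      have h41 := (abs_le.mp (hFb κ)).1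
      have h42 := hcM κ
      linarith
    have ha : -(3 * Mc / ε) ≤ (G κ - cc κ) / ε := by
      rw [← neg_div]
      exact (div_le_div_iff_of_pos_right hε).mpr h3
    have hb : -(3 * Mc / ε) ≤ (F κ - cc κ) / ε := by
      rw [← neg_div]
      exact (div_le_div_iff_of_pos_right hε).mpr h4
    have hkey := EmpPL.exp_mono_bound (M := 3 * Mc / ε) ha hb
    have hab : (G κ - cc κ) / ε - (F κ - cc κ) / ε = (G κ - F κ) / ε := by ring
    rw [hab, ← hEgdef κ, ← hEfdef κ] at hkey
    have hmul := mul_le_mul_of_nonneg_left hkey hε.le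
    have e1 : ε * (Real.exp (-(3 * Mc / ε)) * ((G κ - F κ) / ε) ^ 2)
        = ε⁻¹ * Real.exp (-(3 * Mc / ε)) * (G κ - F κ) ^ 2 := by
      field_simp
    have e2 : ε * ((G κ - F κ) / ε * (Eg κ - Ef κ)) = (G κ - F κ) * (Eg κ - Ef κ) := by
      field_simp
    rw [hKdef]
    linarith [hmul, e1, e2]
  -- factorization lemmas
  have hfact : ∀ (A B : Fin N → ℝ) (i j : Fin m), i ≠ j →
      ((N:ℝ) ^ m)⁻¹ * (∑ κ : Fin m → Fin N, A (κ i) * B (κ j))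
        = ((N:ℝ)⁻¹ * ∑ k, A k) * ((N:ℝ)⁻¹ * ∑ k, B k) := by
    intro A B i j hij
    have h : ∑ κ : Fin m → Fin N, ∏ l,
          ((N:ℝ)⁻¹ * (if l = i then A (κ l) else if l = j then B (κ l) else 1))
        = ∏ l, ∑ kk, ((N:ℝ)⁻¹ * (if l = i then A kk else if l = j then B kk else 1)) :=
      EmpPL.sum_fn_prod (fun l kk => (N:ℝ)⁻¹ * (if l = i then A kk else if l = j then B kk else 1))
    have hL2 : ∀ κ : Fin m → Fin N,
        ∏ l, ((N:ℝ)⁻¹ * (if l = i then A (κ l) else if l = j then B (κ l) else 1))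
          = ((N:ℝ) ^ m)⁻¹ * (A (κ i) * B (κ j)) := by
      intro κ
      rw [Finset.prod_mul_distrib, Finset.prod_const, Finset.card_univ, Fintype.card_fin,
        ← inv_pow]
      congr 1
      rw [Fintype.prod_eq_mul i j hij (fun l hl => by rw [if_neg hl.1, if_neg hl.2])]
      rw [if_pos rfl, if_neg (Ne.symm hij), if_pos rfl]
    have hR2 : ∀ l : Fin m,
        (∑ kk, ((N:ℝ)⁻¹ * (if l = i then A kk else if l = j then B kk else 1)))
          = (if l = i then (N:ℝ)⁻¹ * ∑ kk, A kk
              else if l = j then (N:ℝ)⁻¹ * ∑ kk, B kk else 1) := by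
      intro l
      rcases eq_or_ne l i with rfl | h1
      · simp [← Finset.mul_sum]
      · rcases eq_or_ne l j with rfl | h2
        · simp [h1, ← Finset.mul_sum]
        · simp only [if_neg h1, if_neg h2, mul_one, Finset.sum_const, Finset.card_univ,
            Fintype.card_fin, nsmul_eq_mul]
          field_simp
    calc ((N:ℝ) ^ m)⁻¹ * (∑ κ : Fin m → Fin N, A (κ i) * B (κ j))
        = ∑ κ : Fin m → Fin N, ∏ l,
            ((N:ℝ)⁻¹ * (if l = i then A (κ l) else if l = j then B (κ l) else 1)) := by
          rw [Finset.mul_sum]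
          exact Finset.sum_congr rfl fun κ _ => (hL2 κ).symm
      _ = ∏ l, ∑ kk, ((N:ℝ)⁻¹ * (if l = i then A kk else if l = j then B kk else 1)) := h
      _ = ((N:ℝ)⁻¹ * ∑ k, A k) * ((N:ℝ)⁻¹ * ∑ k, B k) := by
          rw [Finset.prod_congr rfl fun l _ => hR2 l]
          rw [Fintype.prod_eq_mul i j hij (fun l hl => by rw [if_neg hl.1, if_neg hl.2])]
          rw [if_pos rfl, if_neg (Ne.symm hij), if_pos rfl]
  have hdiag : ∀ (A : Fin N → ℝ) (i : Fin m),
      ((N:ℝ) ^ m)⁻¹ * (∑ κ : Fin m → Fin N, A (κ i) * A (κ i))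
        = (N:ℝ)⁻¹ * ∑ k, A k * A k := by
    intro A i
    have h : ∑ κ : Fin m → Fin N, ∏ l, ((N:ℝ)⁻¹ * (if l = i then A (κ l) * A (κ l) else 1))
        = ∏ l, ∑ kk, ((N:ℝ)⁻¹ * (if l = i then A kk * A kk else 1)) :=
      EmpPL.sum_fn_prod (fun l kk => (N:ℝ)⁻¹ * (if l = i then A kk * A kk else 1))
    have hL2 : ∀ κ : Fin m → Fin N,
        ∏ l, ((N:ℝ)⁻¹ * (if l = i then A (κ l) * A (κ l) else 1))
          = ((N:ℝ) ^ m)⁻¹ * (A (κ i) * A (κ i)) := by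
      intro κ
      rw [Finset.prod_mul_distrib, Finset.prod_const, Finset.card_univ, Fintype.card_fin,
        ← inv_pow]
      congr 1
      rw [Fintype.prod_eq_single i (fun l hl => by rw [if_neg hl]), if_pos rfl]
    have hR2 : ∀ l : Fin m, (∑ kk, ((N:ℝ)⁻¹ * (if l = i then A kk * A kk else 1)))
        = (if l = i then (N:ℝ)⁻¹ * ∑ kk, A kk * A kk else 1) := by
      intro l
      rcases eq_or_ne l i with rfl | h1
      · simp [← Finset.mul_sum]
      · simp only [if_neg h1, mul_one, Finset.sum_const, Finset.card_univ,
          Fintype.card_fin, nsmul_eq_mul]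
        field_simp
    calc ((N:ℝ) ^ m)⁻¹ * (∑ κ : Fin m → Fin N, A (κ i) * A (κ i))
        = ∑ κ : Fin m → Fin N, ∏ l, ((N:ℝ)⁻¹ * (if l = i then A (κ l) * A (κ l) else 1)) := by
          rw [Finset.mul_sum]
          exact Finset.sum_congr rfl fun κ _ => (hL2 κ).symm
      _ = ∏ l, ∑ kk, ((N:ℝ)⁻¹ * (if l = i then A kk * A kk else 1)) := h
      _ = (N:ℝ)⁻¹ * ∑ k, A k * A k := by
          rw [Finset.prod_congr rfl fun l _ => hR2 l,
            Fintype.prod_eq_single i (fun l hl => by rw [if_neg hl]), if_pos rfl]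
  -- means vanish
  have hmean0 : ∀ i : Fin m, (i : ℕ) + 1 < m →
      (N:ℝ)⁻¹ * ∑ k, (g i (x i k) - f i (x i k)) = 0 := by
    intro i hi
    have hf0 := hfnorm i hi
    have hg0 := hgnorm i hi
    rw [EmpPL.empMeas_integral] at hf0 hg0
    rw [Finset.sum_sub_distrib, mul_sub, hg0, hf0]
    norm_num
  -- norm expansion
  have hSexp : ((N:ℝ) ^ m)⁻¹ * ∑ κ : Fin m → Fin N, (G κ - F κ) ^ 2
      = ∑ j, (N:ℝ)⁻¹ * ∑ k, (g j (x j k) - f j (x j k)) ^ 2 := by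
    have h1 : ∀ κ : Fin m → Fin N, (G κ - F κ) ^ 2
        = ∑ i, ∑ j, (g i (x i (κ i)) - f i (x i (κ i)))
            * (g j (x j (κ j)) - f j (x j (κ j))) := by
      intro κ
      rw [hGdef, hFdef, ← Finset.sum_sub_distrib, sq, Finset.sum_mul_sum]
    have h3 : ∑ κ : Fin m → Fin N, ∑ i, ∑ j,
          (g i (x i (κ i)) - f i (x i (κ i))) * (g j (x j (κ j)) - f j (x j (κ j)))
        = ∑ i, ∑ j, ∑ κ : Fin m → Fin N,
            (g i (x i (κ i)) - f i (x i (κ i))) * (g j (x j (κ j)) - f j (x j (κ j))) := by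
      rw [Finset.sum_comm]
      exact Finset.sum_congr rfl fun i _ => Finset.sum_comm
    rw [Finset.sum_congr rfl fun κ _ => h1 κ, h3]
    rw [Finset.mul_sum]
    refine Finset.sum_congr rfl fun i _ => ?_
    rw [Finset.mul_sum]
    rw [Finset.sum_eq_single i
      (fun j' _ hne => ?_) (fun hni => absurd (Finset.mem_univ i) hni)]
    · have hd : ((N:ℝ) ^ m)⁻¹ * (∑ κ : Fin m → Fin N,
          (g i (x i (κ i)) - f i (x i (κ i))) * (g i (x i (κ i)) - f i (x i (κ i))))
            = (N:ℝ)⁻¹ * ∑ k, (g i (x i k) - f i (x i k)) * (g i (x i k) - f i (x i k)) :=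
        hdiag (fun k => g i (x i k) - f i (x i k)) i
      rw [hd]
      congr 1
      exact Finset.sum_congr rfl fun k _ => (sq _).symm
    · have hf := hfact (fun k => g i (x i k) - f i (x i k))
        (fun k => g j' (x j' k) - f j' (x j' k)) i j' (Ne.symm hne)
      rw [hf]
      rcases lt_or_ge ((i : ℕ) + 1) m with hi | hi
      · rw [hmean0 i hi, zero_mul]
      · have hj : (j' : ℕ) + 1 < m := by
          have h1' := i.isLt
          have h2' := j'.isLt
          by_contra hj2
          push_neg at hj2
          exact hne (Fin.ext (by omega))
        rw [hmean0 j' hj, mul_zero]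
  -- Cauchy-Schwarz
  have hCSraw := Finset.sum_mul_sq_le_sq_mul_sq Finset.univ
    (fun p : Fin m × Fin N => g p.1 (x p.1 p.2) - f p.1 (x p.1 p.2))
    (fun p : Fin m × Fin N => T p.1 p.2)
  have hprod1 : ∑ j, (N:ℝ)⁻¹ * ∑ k, (g j (x j k) - f j (x j k)) * T j k
      = (N:ℝ)⁻¹ * ∑ p : Fin m × Fin N,
          (g p.1 (x p.1 p.2) - f p.1 (x p.1 p.2)) * T p.1 p.2 := by
    simp only [Fintype.sum_prod_type, Finset.mul_sum]
  have hprod2 : ∑ j, (N:ℝ)⁻¹ * ∑ k, (g j (x j k) - f j (x j k)) ^ 2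
      = (N:ℝ)⁻¹ * ∑ p : Fin m × Fin N,
          (g p.1 (x p.1 p.2) - f p.1 (x p.1 p.2)) ^ 2 := by
    simp only [Fintype.sum_prod_type, Finset.mul_sum]
  have hprod3 : ∑ j, (N:ℝ)⁻¹ * ∑ k, (T j k) ^ 2
      = (N:ℝ)⁻¹ * ∑ p : Fin m × Fin N, (T p.1 p.2) ^ 2 := by
    simp only [Fintype.sum_prod_type, Finset.mul_sum]
  have hCS2 : (∑ j, (N:ℝ)⁻¹ * ∑ k, (g j (x j k) - f j (x j k)) * T j k) ^ 2
      ≤ (∑ j, (N:ℝ)⁻¹ * ∑ k, (g j (x j k) - f j (x j k)) ^ 2)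
          * (∑ j, (N:ℝ)⁻¹ * ∑ k, (T j k) ^ 2) := by
    rw [hprod1, hprod2, hprod3]
    have h6 := mul_le_mul_of_nonneg_left hCSraw
      (le_of_lt (show (0:ℝ) < (N:ℝ)⁻¹ * (N:ℝ)⁻¹ by positivity))
    calc ((N:ℝ)⁻¹ * ∑ p : Fin m × Fin N,
            (g p.1 (x p.1 p.2) - f p.1 (x p.1 p.2)) * T p.1 p.2) ^ 2
        = ((N:ℝ)⁻¹ * (N:ℝ)⁻¹) * (∑ p : Fin m × Fin N,
            (g p.1 (x p.1 p.2) - f p.1 (x p.1 p.2)) * T p.1 p.2) ^ 2 := by ring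
      _ ≤ ((N:ℝ)⁻¹ * (N:ℝ)⁻¹) * ((∑ p : Fin m × Fin N,
            (g p.1 (x p.1 p.2) - f p.1 (x p.1 p.2)) ^ 2)
              * ∑ p : Fin m × Fin N, (T p.1 p.2) ^ 2) := h6
      _ = ((N:ℝ)⁻¹ * ∑ p : Fin m × Fin N,
            (g p.1 (x p.1 p.2) - f p.1 (x p.1 p.2)) ^ 2)
              * ((N:ℝ)⁻¹ * ∑ p : Fin m × Fin N, (T p.1 p.2) ^ 2) := by ring
  -- the PL bound
  have hKS : K * (∑ j, (N:ℝ)⁻¹ * ∑ k, (g j (x j k) - f j (x j k)) ^ 2)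
      ≤ ∑ j, (N:ℝ)⁻¹ * ∑ k, (g j (x j k) - f j (x j k)) * T j k := by
    rw [hIeq, ← hSexp]
    have h5 : K * (((N:ℝ) ^ m)⁻¹ * ∑ κ : Fin m → Fin N, (G κ - F κ) ^ 2)
        = ((N:ℝ) ^ m)⁻¹ * ∑ κ : Fin m → Fin N, K * (G κ - F κ) ^ 2 := by
      simp only [Finset.mul_sum]
      exact Finset.sum_congr rfl fun κ _ => by ring
    rw [h5]
    exact mul_le_mul_of_nonneg_left
      (Finset.sum_le_sum fun κ _ => hmono κ) (by positivity)
  have hS0 : 0 ≤ ∑ j, (N:ℝ)⁻¹ * ∑ k, (g j (x j k) - f j (x j k)) ^ 2 :=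
    Finset.sum_nonneg fun j _ => mul_nonneg (by positivity)
      (Finset.sum_nonneg fun k _ => sq_nonneg _)
  have hR0 : 0 ≤ ∑ j, (N:ℝ)⁻¹ * ∑ k, (T j k) ^ 2 :=
    Finset.sum_nonneg fun j _ => mul_nonneg (by positivity)
      (Finset.sum_nonneg fun k _ => sq_nonneg _)
  rw [hgoalL, hgoalR']
  set SS := ∑ j, (N:ℝ)⁻¹ * ∑ k, (g j (x j k) - f j (x j k)) ^ 2 with hSS
  set RR := ∑ j, (N:ℝ)⁻¹ * ∑ k, (T j k) ^ 2 with hRR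
  set II := ∑ j, (N:ℝ)⁻¹ * ∑ k, (g j (x j k) - f j (x j k)) * T j k with hII
  rcases eq_or_lt_of_le hS0 with hS00 | hSpos
  · rw [← hS00]
    exact mul_nonneg (by positivity) hR0
  · have h7 : (K * SS) ^ 2 ≤ II ^ 2 := pow_le_pow_left₀ (mul_nonneg hKpos.le hS0) hKS 2
    have h8 : (K * SS) ^ 2 ≤ SS * RR := le_trans h7 hCS2
    have hexpK : ε ^ 2 * Real.exp (6 * Mc / ε) * (K * K) = 1 := by
      have h10 : Real.exp (6 * Mc / ε)
          * (Real.exp (-(3 * Mc / ε)) * Real.exp (-(3 * Mc / ε))) = 1 := by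
        rw [← Real.exp_add, ← Real.exp_add,
          show 6 * Mc / ε + (-(3 * Mc / ε) + -(3 * Mc / ε)) = 0 by ring, Real.exp_zero]
      calc ε ^ 2 * Real.exp (6 * Mc / ε) * (K * K)
          = (ε ^ 2 * (ε⁻¹ * ε⁻¹)) * (Real.exp (6 * Mc / ε)
              * (Real.exp (-(3 * Mc / ε)) * Real.exp (-(3 * Mc / ε)))) := by
            rw [hKdef]; ring
        _ = 1 := by
            rw [h10, mul_one]
            field_simp
    have h9 : K * K * SS ≤ RR := by
      have h11 : SS * (K * K * SS) ≤ SS * RR := by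
        calc SS * (K * K * SS) = (K * SS) ^ 2 := by ring
          _ ≤ SS * RR := h8
      exact le_of_mul_le_mul_left h11 hSpos
    calc SS = ε ^ 2 * Real.exp (6 * Mc / ε) * (K * K) * SS := by rw [hexpK, one_mul]
      _ = ε ^ 2 * Real.exp (6 * Mc / ε) * (K * K * SS) := by ring
      _ ≤ ε ^ 2 * Real.exp (6 * Mc / ε) * RR := by
          exact mul_le_mul_of_nonneg_left h9 (by positivity)
end
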